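/- arXiv:1707.08243 — 4 statements merged into one kernel-verified Lean document; each statement's English description precedes it below -/
import Mathlib

section
/- Let (A(p), B(p)) be a linearly parameterized matrix pair satisfying the binary assumption, with graph 𝔾. Then 𝔾 has an unbalanced similarity class of multi-colored subgraphs and a spanning subgraph which is a disjoint union of m cactus graphs rooted at the m vertices with labels n+1 to n+m, respectively, if and only if 𝔾 has an unbalanced similarity class of multi-colored subgraphs and a spanning forest rooted at the m vertices with labels n+1 to n+m. -/
open Matrix BigOperators

namespace StructCtrl

/-- A general linearly parameterized `n1 × n2` matrix `M(p) = ∑ k, p k • (g k * h k)`,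
with columns `g k` and rows `h k`. -/
noncomputable def paramMat {q n1 n2 : ℕ} (g : Fin q → Fin n1 → ℝ) (h : Fin q → Fin n2 → ℝ)
    (p : Fin q → ℝ) : Matrix (Fin n1) (Fin n2) ℝ :=
  Matrix.of fun i j => ∑ k : Fin q, p k * (g k i * h k j)

/-- Generic rank: the maximum over `p ∈ ℝ^q` of the rank of `M(p)`. -/
noncomputable def genericRank {q n1 n2 : ℕ} (g : Fin q → Fin n1 → ℝ)
    (h : Fin q → Fin n2 → ℝ) : ℕ :=
  ⨆ p : Fin q → ℝ, (paramMat g h p).rank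

/-- `A(p)`: the `n × n` matrix of the first `n` columns of `[A(p) B(p)]`. -/
noncomputable def Amat {n m q : ℕ} (g : Fin q → Fin n → ℝ) (h : Fin q → Fin (n + m) → ℝ)
    (p : Fin q → ℝ) : Matrix (Fin n) (Fin n) ℝ :=
  Matrix.of fun i j => paramMat g h p i (Fin.castAdd m j)

/-- `B(p)`: the `n × m` matrix of the last `m` columns of `[A(p) B(p)]`. -/
noncomputable def Bmat {n m q : ℕ} (g : Fin q → Fin n → ℝ) (h : Fin q → Fin (n + m) → ℝ)
    (p : Fin q → ℝ) : Matrix (Fin n) (Fin m) ℝ :=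
  Matrix.of fun i j => paramMat g h p i (Fin.natAdd n j)

/-- Controllability matrix `[B  AB  …  A^{n-1}B]` (columns indexed by `Fin n × Fin m`). -/
noncomputable def ctrbMat {n m : ℕ} (A : Matrix (Fin n) (Fin n) ℝ)
    (B : Matrix (Fin n) (Fin m) ℝ) : Matrix (Fin n) (Fin n × Fin m) ℝ :=
  Matrix.of fun i kj => (A ^ (kj.1 : ℕ) * B) i kj.2

/-- `(A, B)` is structurally controllable: for some parameter value the controllability
matrix has full rank `n`. -/
def StructurallyControllable {n m q : ℕ} (g : Fin q → Fin n → ℝ)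
    (h : Fin q → Fin (n + m) → ℝ) : Prop :=
  ∃ p : Fin q → ℝ, (ctrbMat (Amat g h p) (Bmat g h p)).rank = n

/-- The binary assumption: all entries of every `g k` and every `h k` are `0` or `1`. -/
def BinaryAssumption {n m q : ℕ} (g : Fin q → Fin n → ℝ)
    (h : Fin q → Fin (n + m) → ℝ) : Prop :=
  (∀ k i, g k i = 0 ∨ g k i = 1) ∧ (∀ k j, h k j = 0 ∨ h k j = 1)

/-- The unitary assumption: every `g k` and every `h k` is a standard unit vector, and the
pairs `(g k, h k)` are pairwise distinct. -/
def UnitaryAssumption {n m q : ℕ} (g : Fin q → Fin n → ℝ)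
    (h : Fin q → Fin (n + m) → ℝ) : Prop :=
  (∀ k, ∃ i : Fin n, g k = Pi.single i 1) ∧
  (∀ k, ∃ j : Fin (n + m), h k = Pi.single j 1) ∧
  (∀ k k', k ≠ k' → (g k, h k) ≠ (g k', h k'))

/-- `(A, B)` is reducible: some simultaneous permutation of the states puts the pair,
for all parameter values, in block-triangular form with a zero top-right `n1 × (n - n1)`
block of `A` and a zero top `n1 × m` block of `B`, where `1 ≤ n1 < n`. -/
def Reducible {n m q : ℕ} (g : Fin q → Fin n → ℝ) (h : Fin q → Fin (n + m) → ℝ) : Prop :=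
  ∃ (σ : Equiv.Perm (Fin n)) (n1 : ℕ), 1 ≤ n1 ∧ n1 < n ∧ ∀ p : Fin q → ℝ,
    (∀ i j : Fin n, (i : ℕ) < n1 → n1 ≤ (j : ℕ) → Amat g h p (σ i) (σ j) = 0) ∧
    (∀ i : Fin n, (i : ℕ) < n1 → ∀ jb : Fin m, Bmat g h p (σ i) jb = 0)

/-- `(A, B)` is irreducible. -/
def PairIrreducible {n m q : ℕ} (g : Fin q → Fin n → ℝ)
    (h : Fin q → Fin (n + m) → ℝ) : Prop :=
  ¬ Reducible g h

/-- Arc (of any color) of the graph `𝔾` of `(A, B)` from vertex `a` to vertex `b`: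
`b` is a row-vertex `i` (one of the first `n` vertices) and the `(i, a)` entry of some
`g k * h k` is nonzero. -/
def HasArc {n m q : ℕ} (g : Fin q → Fin n → ℝ) (h : Fin q → Fin (n + m) → ℝ)
    (a b : Fin (n + m)) : Prop :=
  ∃ (k : Fin q) (i : Fin n), b = Fin.castAdd m i ∧ g k i * h k a ≠ 0

/-- `𝔾` has a spanning forest rooted at the `m` input vertices `n+1, …, n+m`: every other
vertex is reachable from some input vertex by a directed path. -/
def HasSpanningForestAtInputs {n m q : ℕ} (g : Fin q → Fin n → ℝ)
    (h : Fin q → Fin (n + m) → ℝ) : Prop :=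
  ∀ v : Fin (n + m), (¬ ∃ j : Fin m, Fin.natAdd n j = v) →
    ∃ j : Fin m, Relation.ReflTransGen (HasArc g h) (Fin.natAdd n j) v

/-- A multi-colored subgraph of `𝔾`, encoded by the data of its `n` arcs: each of the
vertices `1, …, n` is the head of exactly one arc, with tail `t i` and color `c i`.
Injectivity of `t` and of `c` says no two arcs share a start vertex or a color (no two
share an end vertex by construction); such a spanning subgraph is exactly a disjoint union
of `m` directed path graphs (whose sources are the `m` input vertices) and directed cycle
graphs, with all arc colors distinct. -/
def IsMCS {n m q : ℕ} (g : Fin q → Fin n → ℝ) (h : Fin q → Fin (n + m) → ℝ)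
    (t : Fin n → Fin (n + m)) (c : Fin n → Fin q) : Prop :=
  Function.Injective t ∧ Function.Injective c ∧
    ∀ i : Fin n, g (c i) i * h (c i) (t i) ≠ 0

/-- A pure sink of the multi-colored subgraph with tail map `t`: a sink that is not a
source (i.e. has no outgoing arc, and is one of the first `n` vertices). -/
def IsPureSink {n m : ℕ} (t : Fin n → Fin (n + m)) (v : Fin (n + m)) : Prop :=
  (¬ ∃ i : Fin n, t i = v) ∧ ∃ i : Fin n, Fin.castAdd m i = v

/-- A pure source: a source (one of the last `m` vertices) that is not a sink. -/
def IsPureSource {n m : ℕ} (t : Fin n → Fin (n + m)) (v : Fin (n + m)) : Prop :=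
  (∃ i : Fin n, t i = v) ∧ ∃ j : Fin m, Fin.natAdd n j = v

/-- A matrimonial partition, encoded by a permutation `μ` that matches each pure sink with
a distinct pure source (the two-element cells are the pairs `{v, μ v}` for `v` a pure sink;
all other vertices lie in singleton cells). -/
def IsMatrimonial {n m : ℕ} (t : Fin n → Fin (n + m)) (μ : Equiv.Perm (Fin (n + m))) : Prop :=
  ∀ v, IsPureSink t v ↔ IsPureSource t (μ v)

/-- The successor map of the quotient of a multi-colored subgraph by a matrimonial
partition: each vertex with an outgoing arc is sent to the head of that arc, each pure
sink is welded to (sent to) its paired pure source, and isolated vertices stay put. -/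
noncomputable def weldMap {n m : ℕ} (t : Fin n → Fin (n + m))
    (μ : Equiv.Perm (Fin (n + m))) (v : Fin (n + m)) : Fin (n + m) :=
  if hv : ∃ i : Fin n, t i = v then Fin.castAdd m hv.choose
  else if ∃ i : Fin n, Fin.castAdd m i = v then μ v else v

/-- Number of orbits of a self-map of `Fin N`. -/
noncomputable def orbitCount {N : ℕ} (f : Fin N → Fin N) : ℕ :=
  (Set.range fun v => {w | ∃ a b : ℕ, f^[a] v = f^[b] w}).ncard

/-- Number of isolated vertices of a multi-colored subgraph (vertices that are both a
source and a sink). -/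
noncomputable def isolatedCount {n m : ℕ} (t : Fin n → Fin (n + m)) : ℕ :=
  {v : Fin (n + m) | (¬ ∃ i : Fin n, t i = v) ∧ ∃ j : Fin m, Fin.natAdd n j = v}.ncard

/-- The number of directed cycle graphs in the quotient of a multi-colored subgraph by a
matrimonial partition: every orbit of the weld map, except the (singleton) orbits of the
isolated vertices, yields exactly one cycle graph of the quotient. -/
noncomputable def quotCycleCount {n m : ℕ} (t : Fin n → Fin (n + m))
    (μ : Equiv.Perm (Fin (n + m))) : ℕ :=
  orbitCount (weldMap t μ) - isolatedCount t

/-- `𝔾` has an unbalanced similarity class of multi-colored subgraphs: for some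
multi-colored subgraph `(t, c)` and some matrimonial partition `μ` for its class, the
numbers of odd and of even multi-colored subgraphs in its similarity class (same sink set,
i.e. same `Set.range t`, and same color set `Set.range c`) differ. -/
def HasUnbalancedClass {n m q : ℕ} (g : Fin q → Fin n → ℝ)
    (h : Fin q → Fin (n + m) → ℝ) : Prop :=
  ∃ (t : Fin n → Fin (n + m)) (c : Fin n → Fin q) (μ : Equiv.Perm (Fin (n + m))),
    IsMCS g h t c ∧ IsMatrimonial t μ ∧
    {tc : (Fin n → Fin (n + m)) × (Fin n → Fin q) |
        IsMCS g h tc.1 tc.2 ∧ Set.range tc.1 = Set.range t ∧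
        Set.range tc.2 = Set.range c ∧ Odd (quotCycleCount tc.1 μ)}.ncard ≠
      {tc : (Fin n → Fin (n + m)) × (Fin n → Fin q) |
        IsMCS g h tc.1 tc.2 ∧ Set.range tc.1 = Set.range t ∧
        Set.range tc.2 = Set.range c ∧ Even (quotCycleCount tc.1 μ)}.ncard

/-- Arc set of the directed path graph whose vertices, in order, are the list `l`. -/
def pathArcs {V : Type*} (l : List V) : Set (V × V) :=
  {a | ∃ k : ℕ, l[k]? = some a.1 ∧ l[k + 1]? = some a.2}

/-- Arc set of the directed cycle graph whose vertices, in cyclic order, are the list `l`. -/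
def cycleArcs {V : Type*} (l : List V) : Set (V × V) :=
  pathArcs l ∪ {a | ∃ x y, l.getLast? = some x ∧ l.head? = some y ∧ a = (x, y)}

/-- A cactus graph with vertex set `W`, arc set `E` and root `r`: a trunk (a directed path
graph, possibly a single vertex, starting at `r`) together with any number of buds, each
bud being a directed cycle graph together with a stem arc from a vertex already in the
graph (on the trunk or on the cycle of another bud) to a vertex of the cycle. -/
inductive IsCactus {V : Type*} : Set V → Set (V × V) → V → Prop where
  | trunk (r : V) (l : List V) (hnd : l.Nodup) (hhead : l.head? = some r) :
      IsCactus {v | v ∈ l} (pathArcs l) r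
  | bud (r : V) (W : Set V) (E : Set (V × V)) (l : List V) (w u : V)
      (hc : IsCactus W E r) (hnd : l.Nodup) (hne : l ≠ [])
      (hdisj : ∀ v ∈ l, v ∉ W) (hw : w ∈ W) (hu : u ∈ l) :
      IsCactus (W ∪ {v | v ∈ l}) (E ∪ cycleArcs l ∪ {(w, u)}) r

/-- `𝔾` has a spanning subgraph which is a disjoint union of `m` cactus graphs rooted at
the `m` input vertices `n+1, …, n+m`, respectively. -/
def HasSpanningCacti {n m q : ℕ} (g : Fin q → Fin n → ℝ)
    (h : Fin q → Fin (n + m) → ℝ) : Prop :=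
  ∃ (W : Fin m → Set (Fin (n + m))) (F : Fin m → Set (Fin (n + m) × Fin (n + m))),
    (∀ j, IsCactus (W j) (F j) (Fin.natAdd n j)) ∧
    (∀ j, ∀ a ∈ F j, HasArc g h a.1 a.2) ∧
    Pairwise (fun j j' => Disjoint (W j) (W j')) ∧
    (⋃ j, W j) = Set.univ

/-- Rank of the submatrix `G_S` whose columns are the `g i`, `i ∈ S`. -/
noncomputable def rankCols {q n1 : ℕ} (g : Fin q → Fin n1 → ℝ) (S : Finset (Fin q)) : ℕ :=
  (Matrix.of fun (i : Fin n1) (k : {x // x ∈ S}) => g k.1 i).rank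

/-- Rank of the submatrix `H_S` whose rows are the `h i`, `i ∈ S`. -/
noncomputable def rankRows {q n2 : ℕ} (h : Fin q → Fin n2 → ℝ) (S : Finset (Fin q)) : ℕ :=
  (Matrix.of fun (k : {x // x ∈ S}) (j : Fin n2) => h k.1 j).rank

/-- `I` is a jointly independent index set of `(G, H)`: both `{g i : i ∈ I}` and
`{h i : i ∈ I}` are linearly independent families. -/
def JointlyIndependent {q n1 n2 : ℕ} (g : Fin q → Fin n1 → ℝ) (h : Fin q → Fin n2 → ℝ)
    (I : Finset (Fin q)) : Prop :=
  LinearIndependent ℝ (fun i : {x // x ∈ I} => g i.1) ∧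
  LinearIndependent ℝ (fun i : {x // x ∈ I} => h i.1)

/-- Maximum cardinality of a nonempty jointly independent index set of `(G, H)`,
taken to be `0` if none exists. -/
noncomputable def maxJointIndep {q n1 n2 : ℕ} (g : Fin q → Fin n1 → ℝ)
    (h : Fin q → Fin n2 → ℝ) : ℕ :=
  sSup (insert 0 {c : ℕ | ∃ I : Finset (Fin q), I.Nonempty ∧
    JointlyIndependent g h I ∧ I.card = c})

/-- Arcs of the transfer graph of `{G_𝐪, H_𝐪}`; vertex `0` is `none`, vertex `i ∈ 𝐪`
is `some i`.  There is an arc from `0` to `i` iff `h_{i2} ≠ 0`, and an arc from `j` to `i`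
iff the scalar `h_{i1} g_j` is nonzero. -/
def TArc {n m q : ℕ} (g : Fin q → Fin n → ℝ) (h : Fin q → Fin (n + m) → ℝ) :
    Option (Fin q) → Option (Fin q) → Prop
  | none, some i => ∃ j : Fin m, h i (Fin.natAdd n j) ≠ 0
  | some j, some i => (∑ l : Fin n, h i (Fin.castAdd m l) * g j l) ≠ 0
  | _, none => False

/-- The transfer graph has a spanning tree rooted at vertex `0`: every vertex `1, …, q`
is reachable from vertex `0` by a directed path. -/
def TransferRootedAtZero {n m q : ℕ} (g : Fin q → Fin n → ℝ)
    (h : Fin q → Fin (n + m) → ℝ) : Prop :=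
  ∀ i : Fin q, Relation.ReflTransGen (TArc g h) none (some i)

/-! A multi-colored subgraph is a spanning union of `m` directed paths starting at the inputs and
of disjoint directed cycles. Spanning cacti contain a spanning forest. Conversely, take the `m`
paths as trunks and attach the cycles one at a time: while some cycle is unattached, a directed
path from an input to it leaves the cacti through an arc `w → u`, and the cycle through `u`
becomes a bud with stem `w → u`. Off the trunks the successor map of the multi-colored subgraph is
onto, hence a permutation of a finite set, so the unattached vertices always form whole cycles. -/

open Function Set Relation

section PeriodicOrbit

variable {V : Type*} {f : V → V}

theorem mem_iterate_minimalPeriod_iff {x y : V} :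
    y ∈ List.iterate f x (minimalPeriod f x) ↔ y ∈ periodicOrbit f x := by
  rw [periodicOrbit, List.range_map_iterate, Cycle.mem_coe_iff]

theorem nodup_iterate_minimalPeriod {x : V} : (List.iterate f x (minimalPeriod f x)).Nodup := by
  rw [← List.range_map_iterate, ← Cycle.nodup_coe_iff]
  exact nodup_periodicOrbit

theorem _root_.Set.MapsTo.subset_periodicPts {s : Set V} (hs : s.Finite) (hm : MapsTo f s s)
    (hinj : InjOn f s) : s ⊆ periodicPts f := by
  have : Finite s := hs
  intro x hx
  exact Semiconj.mapsTo_periodicPts (g := Subtype.val) (fa := hm.restrict) (fun _ => rfl)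
    ((hm.restrict_inj.2 hinj).mem_periodicPts ⟨x, hx⟩)

theorem mapsTo_compl_union_periodicOrbit {s : Set V} {u : V} (hmaps : MapsTo f sᶜ sᶜ)
    (hper : sᶜ ⊆ periodicPts f) (hu : u ∈ periodicPts f) :
    MapsTo f (s ∪ {x | x ∈ periodicOrbit f u})ᶜ (s ∪ {x | x ∈ periodicOrbit f u})ᶜ := by
  rw [compl_union]
  rintro x ⟨hxs, hxu⟩
  refine ⟨hmaps hxs, fun hfx => hxu ?_⟩
  obtain ⟨n, hn⟩ := (mem_periodicOrbit_iff hu).1 hfx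
  have horbit : periodicOrbit f x = periodicOrbit f u := by
    rw [← periodicOrbit_apply_eq (hper hxs), ← hn, periodicOrbit_apply_iterate_eq hu]
  exact horbit ▸ self_mem_periodicOrbit (hper hxs)

end PeriodicOrbit

section Arcs

variable {V : Type*}

theorem reflTransGen_pathArcs {l : List V} {a b : ℕ} {x y : V} (hab : a ≤ b)
    (hx : l[a]? = some x) (hy : l[b]? = some y) :
    ReflTransGen (fun u v => (u, v) ∈ pathArcs l) x y := by
  induction b, hab using Nat.le_induction generalizing y with
  | base => exact Option.some.inj (hx.symm.trans hy) ▸ .refl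
  | succ b _ ih =>
    have hb : b < l.length := by
      have := (List.getElem?_eq_some_iff.mp hy).1
      omega
    have hz : l[b]? = some l[b] := List.getElem?_eq_getElem hb
    exact (ih hz).tail ⟨b, hz, hy⟩

theorem reflTransGen_cycleArcs {l : List V} {x y : V} (hx : x ∈ l) (hy : y ∈ l) :
    ReflTransGen (fun u v => (u, v) ∈ cycleArcs l) x y := by
  have hne : l ≠ [] := List.ne_nil_of_mem hx
  obtain ⟨a, ha, rfl⟩ := List.getElem_of_mem hx
  obtain ⟨b, hb, rfl⟩ := List.getElem_of_mem hy
  have hpath : ∀ {u v}, ReflTransGen (fun u v => (u, v) ∈ pathArcs l) u v →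
      ReflTransGen (fun u v => (u, v) ∈ cycleArcs l) u v :=
    fun h => ReflTransGen.mono (fun _ _ huv => Or.inl huv) _ _ h
  have hlast : l[l.length - 1]? = some (l.getLast hne) := by
    rw [List.getLast_eq_getElem, List.getElem?_eq_getElem]
  have hhead : l[0]? = some (l.head hne) := by
    rw [← List.head?_eq_getElem?, List.head?_eq_some_head]
  have hwrap : (l.getLast hne, l.head hne) ∈ cycleArcs l :=
    Or.inr ⟨_, _, List.getLast?_eq_some_getLast hne, List.head?_eq_some_head hne, rfl⟩
  have hto_last := reflTransGen_pathArcs (by omega) (List.getElem?_eq_getElem ha) hlast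
  have hfrom_head := reflTransGen_pathArcs (Nat.zero_le b) hhead (List.getElem?_eq_getElem hb)
  exact ((hpath hto_last).tail hwrap).trans (hpath hfrom_head)

theorem exists_of_mem_pathArcs_iterate {f : V → V} {x : V} {n : ℕ} {a : V × V}
    (ha : a ∈ pathArcs (List.iterate f x n)) :
    ∃ k, k + 1 < n ∧ a.1 = f^[k] x ∧ a.2 = f a.1 := by
  obtain ⟨k, h1, h2⟩ := ha
  have hk : k + 1 < n := by simpa using (List.getElem?_eq_some_iff.mp h2).1
  rw [List.getElem?_iterate _ _ _ _ (by omega), Option.some.injEq] at h1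
  rw [List.getElem?_iterate _ _ _ _ hk, Option.some.injEq, iterate_succ_apply'] at h2
  exact ⟨k, hk, h1.symm, by rw [← h1, h2]⟩

theorem forall_mem_cycleArcs_periodicOrbit {f : V → V} {x : V} (hx : x ∈ periodicPts f)
    {R : V → V → Prop} (hR : ∀ v ∈ periodicOrbit f x, R v (f v)) :
    ∀ a ∈ cycleArcs (List.iterate f x (minimalPeriod f x)), R a.1 a.2 := by
  rintro a (ha | ⟨y, z, hy, hz, rfl⟩)
  · obtain ⟨k, -, h1, h2⟩ := exists_of_mem_pathArcs_iterate ha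
    exact h2 ▸ hR _ (h1 ▸ iterate_mem_periodicOrbit hx k)
  · have hp := minimalPeriod_pos_of_mem_periodicPts hx
    rw [List.getLast?_eq_getElem?, List.length_iterate,
      List.getElem?_iterate _ _ _ _ (by omega), Option.some.injEq] at hy
    rw [List.head?_eq_getElem?, List.getElem?_iterate _ _ _ _ hp, Option.some.injEq] at hz
    have hwrap : z = f y := by
      rw [← hy, ← hz, ← iterate_succ_apply' f, Nat.succ_eq_add_one, Nat.sub_add_cancel hp,
        iterate_minimalPeriod, iterate_zero_apply]
    exact hwrap ▸ hR y (hy ▸ iterate_mem_periodicOrbit hx _)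

theorem _root_.Relation.ReflTransGen.exists_rel_mem_notMem {R : V → V → Prop} {U : Set V}
    {a b : V} (hab : ReflTransGen R a b) (ha : a ∈ U) (hb : b ∉ U) :
    ∃ w u, w ∈ U ∧ u ∉ U ∧ R w u := by
  induction hab with
  | refl => exact absurd ha hb
  | @tail y z _ hyz ih =>
    by_cases hy : y ∈ U
    · exact ⟨y, z, hy, hb, hyz⟩
    · exact ih hy

end Arcs

section Cactus

variable {V ι : Type*}

theorem IsCactus.root_mem {W : Set V} {E : Set (V × V)} {r : V} (hc : IsCactus W E r) :
    r ∈ W := by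
  induction hc with
  | trunk r l _ hhead => exact List.mem_of_mem_head? hhead
  | bud _ _ _ _ _ _ _ _ _ _ _ _ ih => exact Or.inl ih

theorem IsCactus.reflTransGen {W : Set V} {E : Set (V × V)} {r v : V} (hc : IsCactus W E r)
    (hv : v ∈ W) : ReflTransGen (fun a b => (a, b) ∈ E) r v := by
  induction hc generalizing v with
  | trunk r l _ hhead =>
    obtain ⟨b, hb, rfl⟩ := List.getElem_of_mem hv
    exact reflTransGen_pathArcs (Nat.zero_le b) (List.head?_eq_getElem? ▸ hhead)
      (List.getElem?_eq_getElem hb)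
  | bud r W E l w u _ _ _ _ hw hu ih =>
    have hmono : ∀ {E' : Set (V × V)}, E' ⊆ E ∪ cycleArcs l ∪ {(w, u)} → ∀ {x y},
        ReflTransGen (fun a b => (a, b) ∈ E') x y →
        ReflTransGen (fun a b => (a, b) ∈ E ∪ cycleArcs l ∪ {(w, u)}) x y :=
      fun hsub _ _ => ReflTransGen.mono (fun _ _ hab => hsub hab) _ _
    rcases hv with hv | hv
    · exact hmono (fun _ ha => Or.inl (Or.inl ha)) (ih hv)
    · exact ((hmono (fun _ ha => Or.inl (Or.inl ha)) (ih hw)).tail (Or.inr rfl)).trans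
        (hmono (fun _ ha => Or.inl (Or.inr ha)) (reflTransGen_cycleArcs hu hv))

variable {E : V → V → Prop} {r : ι → V} {W : ι → Set V} {F : ι → Set (V × V)}

structure IsCactusFamily (E : V → V → Prop) (r : ι → V) (W : ι → Set V)
    (F : ι → Set (V × V)) : Prop where
  isCactus : ∀ j, IsCactus (W j) (F j) (r j)
  arc : ∀ j, ∀ a ∈ F j, E a.1 a.2
  pairwise_disjoint : Pairwise (Disjoint on W)

theorem IsCactusFamily.root_mem_iUnion (hF : IsCactusFamily E r W F) (j : ι) :
    r j ∈ ⋃ k, W k :=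
  mem_iUnion.2 ⟨j, (hF.isCactus j).root_mem⟩

theorem iUnion_update_union [DecidableEq ι] (W : ι → Set V) (j : ι) (s : Set V) :
    ⋃ k, update W j (W j ∪ s) k = (⋃ k, W k) ∪ s := by
  ext v
  simp only [mem_iUnion, mem_union, update_apply]
  constructor
  · rintro ⟨k, hk⟩
    split_ifs at hk with h
    · exact hk.imp_left fun hv => ⟨j, hv⟩
    · exact Or.inl ⟨k, hk⟩
  · rintro (⟨k, hk⟩ | hv)
    · by_cases h : k = j
      · exact ⟨j, by simp [h ▸ hk]⟩
      · exact ⟨k, by simp [h, hk]⟩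
    · exact ⟨j, by simp [hv]⟩

theorem IsCactusFamily.addBud [DecidableEq ι] (hF : IsCactusFamily E r W F) {l : List V}
    (hnd : l.Nodup) (hne : l ≠ []) (hl : ∀ v ∈ l, v ∉ ⋃ k, W k)
    (hlE : ∀ a ∈ cycleArcs l, E a.1 a.2) {j : ι} {w u : V} (hw : w ∈ W j) (hu : u ∈ l)
    (hwu : E w u) :
    IsCactusFamily E r (update W j (W j ∪ {v | v ∈ l}))
      (update F j (F j ∪ cycleArcs l ∪ {(w, u)})) where
  isCactus k := by
    rcases eq_or_ne k j with rfl | hk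
    · simp only [update_self]
      exact .bud _ _ _ l w u (hF.isCactus k) hnd hne
        (fun v hv hvW => hl v hv (mem_iUnion.2 ⟨k, hvW⟩)) hw hu
    · simpa only [update_of_ne hk] using hF.isCactus k
  arc k a ha := by
    rcases eq_or_ne k j with rfl | hk
    · simp only [update_self] at ha
      rcases ha with (ha | ha) | rfl
      · exact hF.arc k a ha
      · exact hlE a ha
      · exact hwu
    · exact hF.arc k a (by simpa only [update_of_ne hk] using ha)
  pairwise_disjoint k k' hkk' := by
    have hlW : ∀ k, Disjoint {v | v ∈ l} (W k) := fun k =>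
      disjoint_left.2 fun v hv hvW => hl v hv (mem_iUnion.2 ⟨k, hvW⟩)
    simp only [onFun, update_apply]
    split_ifs with h h' h'
    · exact absurd (h.trans h'.symm) hkk'
    · exact disjoint_union_left.2 ⟨hF.pairwise_disjoint (h ▸ hkk'), hlW k'⟩
    · exact disjoint_union_right.2 ⟨hF.pairwise_disjoint (h' ▸ hkk'), (hlW k).symm⟩
    · exact hF.pairwise_disjoint hkk'

theorem IsCactusFamily.exists_iUnion_eq_univ [Finite V] {f : V → V} (hF : IsCactusFamily E r W F)
    (hreach : ∀ v, ∃ j, ReflTransGen E (r j) v)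
    (hper : (⋃ j, W j)ᶜ ⊆ periodicPts f) (hE : ∀ v ∉ ⋃ j, W j, E v (f v))
    (hmaps : MapsTo f (⋃ j, W j)ᶜ (⋃ j, W j)ᶜ) :
    ∃ W' F', IsCactusFamily E r W' F' ∧ ⋃ j, W' j = univ := by
  classical
  induction hk : (⋃ j, W j)ᶜ.ncard using Nat.strong_induction_on generalizing W F with
  | _ k ih =>
  by_cases hU : ⋃ j, W j = univ
  · exact ⟨W, F, hF, hU⟩
  obtain ⟨v, hv⟩ := (ne_univ_iff_exists_notMem _).1 hU
  obtain ⟨j, hjv⟩ := hreach v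
  obtain ⟨w, u, hw, hu, hwu⟩ := hjv.exists_rel_mem_notMem (hF.root_mem_iUnion j) hv
  obtain ⟨j', hw⟩ := mem_iUnion.1 hw
  have hup := hper hu
  have hout : ∀ x ∈ periodicOrbit f u, x ∉ ⋃ j, W j := fun x hx => by
    obtain ⟨n, rfl⟩ := (mem_periodicOrbit_iff hup).1 hx
    exact hmaps.iterate n hu
  have hul := mem_iterate_minimalPeriod_iff.2 (self_mem_periodicOrbit hup)
  have hF' := hF.addBud nodup_iterate_minimalPeriod (List.ne_nil_of_mem hul)
    (fun x hx => hout x (mem_iterate_minimalPeriod_iff.1 hx))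
    (forall_mem_cycleArcs_periodicOrbit hup fun x hx => hE x (hout x hx)) hw hul hwu
  have hunion : ⋃ k, update W j' (W j' ∪ {x | x ∈ List.iterate f u (minimalPeriod f u)}) k =
      (⋃ k, W k) ∪ {x | x ∈ periodicOrbit f u} := by
    simp only [iUnion_update_union, mem_iterate_minimalPeriod_iff]
  have hsub : ⋃ k, W k ⊂ (⋃ k, W k) ∪ {x | x ∈ periodicOrbit f u} :=
    ssubset_of_subset_not_subset subset_union_left fun h => hout u (self_mem_periodicOrbit hup)
      (h (Or.inr (self_mem_periodicOrbit hup)))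
  refine ih _ ?_ hF' ?_ (fun x hx => hE x ?_) ?_ rfl <;> rw [hunion] at *
  · exact hk ▸ ncard_lt_ncard (compl_lt_compl_iff_lt.2 hsub)
  · exact (compl_subset_compl.2 hsub.subset).trans hper
  · exact compl_subset_compl.2 hsub.subset hx
  · exact mapsTo_compl_union_periodicOrbit hmaps hper hup

end Cactus

section PathCycleCover

variable {V ι : Type*} {E : V → V → Prop} {r : ι → V} {S : V → V} {D : Set V}

/-- The arcs `(a, S a)` with `a ∈ D` form a spanning subgraph of `E` that is a disjoint union of
directed paths starting at the roots `r j` and of directed cycles; the vertices without an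
outgoing arc are those outside `D`, and `S` fixes them. -/
structure IsPathCycleCover (E : V → V → Prop) (r : ι → V) (S : V → V) (D : Set V) :
    Prop where
  injective_root : Injective r
  injOn : InjOn S D
  arc : ∀ a ∈ D, E a (S a)
  apply_ne_root : ∀ a ∈ D, ∀ j, S a ≠ r j
  exists_pred : ∀ v, (∀ j, r j ≠ v) → ∃ a ∈ D, S a = v
  apply_of_notMem : ∀ a ∉ D, S a = a

def trunk (S : V → V) (r : ι → V) (K : ι → ℕ) (j : ι) : Set V :=
  {v | v ∈ List.iterate S (r j) (K j + 1)}

theorem mem_iUnion_trunk {K : ι → ℕ} {v : V} :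
    v ∈ ⋃ j, trunk S r K j ↔ ∃ j, ∃ k ≤ K j, S^[k] (r j) = v := by
  simp only [trunk, mem_iUnion, mem_ofPred_eq, List.mem_iterate, Nat.lt_succ_iff, eq_comm]

namespace IsPathCycleCover

variable {K : ι → ℕ}

theorem eq_of_iterate_root_eq (hC : IsPathCycleCover E r S D) {a b : ℕ} {j j' : ι}
    (ha : ∀ i < a, S^[i] (r j) ∈ D) (hb : ∀ i < b, S^[i] (r j') ∈ D)
    (heq : S^[a] (r j) = S^[b] (r j')) : a = b ∧ j = j' := by
  induction a generalizing b with
  | zero =>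
    cases b with
    | zero => exact ⟨rfl, hC.injective_root heq⟩
    | succ b =>
      rw [iterate_succ_apply'] at heq
      exact absurd heq.symm (hC.apply_ne_root _ (hb b b.lt_add_one) j)
  | succ a ih =>
    cases b with
    | zero =>
      rw [iterate_succ_apply'] at heq
      exact absurd heq (hC.apply_ne_root _ (ha a a.lt_add_one) j')
    | succ b =>
      rw [iterate_succ_apply', iterate_succ_apply'] at heq
      obtain ⟨rfl, rfl⟩ := ih (fun i hi => ha i (by omega)) (fun i hi => hb i (by omega))
        (hC.injOn (ha a a.lt_add_one) (hb b b.lt_add_one) heq)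
      exact ⟨rfl, rfl⟩

theorem exists_first_iterate_root_notMem [Finite V] (hC : IsPathCycleCover E r S D) (j : ι) :
    ∃ k, (∀ i < k, S^[i] (r j) ∈ D) ∧ S^[k] (r j) ∉ D := by
  classical
  have hex : ∃ k, S^[k] (r j) ∉ D := by
    by_contra! hall
    exact not_injective_infinite_finite (fun k => S^[k] (r j)) fun a b hab =>
      (hC.eq_of_iterate_root_eq (fun i _ => hall i) (fun i _ => hall i) hab).1
  exact ⟨Nat.find hex, fun i hi => not_not.1 (Nat.find_min hex hi), Nat.find_spec hex⟩

theorem isCactusFamily_trunk (hC : IsPathCycleCover E r S D)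
    (hK : ∀ j, ∀ i < K j, S^[i] (r j) ∈ D) :
    IsCactusFamily E r (trunk S r K) fun j => pathArcs (List.iterate S (r j) (K j + 1)) where
  isCactus j := by
    refine .trunk _ _ ?_ rfl
    rw [← List.range_map_iterate, List.nodup_map_iff_inj_on List.nodup_range]
    intro a ha b hb hab
    rw [List.mem_range] at ha hb
    exact (hC.eq_of_iterate_root_eq (fun i _ => hK j i (by omega))
      (fun i _ => hK j i (by omega)) hab).1
  arc j a ha := by
    obtain ⟨k, hk, h1, h2⟩ := exists_of_mem_pathArcs_iterate ha
    rw [h2, h1]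
    exact hC.arc _ (hK j k (by omega))
  pairwise_disjoint j j' hjj' := disjoint_left.2 fun v hv hv' => by
    obtain ⟨a, ha, rfl⟩ := List.mem_iterate.1 hv
    obtain ⟨b, hb, hab⟩ := List.mem_iterate.1 hv'
    exact hjj' (hC.eq_of_iterate_root_eq (fun i _ => hK j i (by omega))
      (fun i _ => hK j' i (by omega)) hab).2

theorem mapsTo_compl_iUnion_trunk (hC : IsPathCycleCover E r S D)
    (hK : ∀ j, ∀ i < K j, S^[i] (r j) ∈ D) :
    MapsTo S (⋃ j, trunk S r K j)ᶜ (⋃ j, trunk S r K j)ᶜ := by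
  intro v hv hSv
  obtain ⟨j, k, hk, hkv⟩ := mem_iUnion_trunk.1 hSv
  refine hv (mem_iUnion_trunk.2 ?_)
  by_cases hvD : v ∈ D
  · cases k with
    | zero => exact absurd hkv.symm (hC.apply_ne_root v hvD j)
    | succ k =>
      rw [iterate_succ_apply'] at hkv
      exact ⟨j, k, by omega, hC.injOn (hK j k (by omega)) hvD hkv⟩
  · exact ⟨j, k, hk, hkv.trans (hC.apply_of_notMem v hvD)⟩

theorem exists_pred_compl_iUnion_trunk (hC : IsPathCycleCover E r S D)
    (hK : ∀ j, S^[K j] (r j) ∉ D) {v : V} (hv : v ∉ ⋃ j, trunk S r K j) :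
    ∃ a ∉ ⋃ j, trunk S r K j, a ∈ D ∧ S a = v := by
  obtain ⟨a, haD, rfl⟩ := hC.exists_pred v fun j hj =>
    hv (mem_iUnion_trunk.2 ⟨j, 0, Nat.zero_le _, hj⟩)
  refine ⟨a, fun ha => hv ?_, haD, rfl⟩
  obtain ⟨j, k, hk, rfl⟩ := mem_iUnion_trunk.1 ha
  have hkK : k ≠ K j := fun h => hK j (h ▸ haD)
  exact mem_iUnion_trunk.2 ⟨j, k + 1, by omega, iterate_succ_apply' _ _ _⟩

theorem compl_iUnion_trunk_subset [Finite V] (hC : IsPathCycleCover E r S D)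
    (hK : ∀ j, (∀ i < K j, S^[i] (r j) ∈ D) ∧ S^[K j] (r j) ∉ D) :
    (⋃ j, trunk S r K j)ᶜ ⊆ periodicPts S ∩ D := by
  have hmaps := hC.mapsTo_compl_iUnion_trunk fun j => (hK j).1
  have hpred := fun v (hv : v ∈ (⋃ j, trunk S r K j)ᶜ) =>
    hC.exists_pred_compl_iUnion_trunk (fun j => (hK j).2) hv
  have hinj : InjOn S (⋃ j, trunk S r K j)ᶜ :=
    ((toFinite _).surjOn_iff_bijOn_of_mapsTo hmaps |>.1 fun v hv =>
      let ⟨a, ha, _, hav⟩ := hpred v hv; ⟨a, ha, hav⟩).injOn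
  intro v hv
  refine ⟨MapsTo.subset_periodicPts (toFinite _) hmaps hinj hv, ?_⟩
  obtain ⟨a, ha, haD, hav⟩ := hpred v hv
  by_contra hvD
  exact hvD (hinj ha hv (hav.trans (hC.apply_of_notMem v hvD).symm) ▸ haD)

theorem exists_isCactusFamily_iUnion_eq_univ [Finite V] (hC : IsPathCycleCover E r S D)
    (hreach : ∀ v, ∃ j, ReflTransGen E (r j) v) :
    ∃ W F, IsCactusFamily E r W F ∧ ⋃ j, W j = univ := by
  choose K hK using hC.exists_first_iterate_root_notMem
  have hcompl := compl_iUnion_trunk_subset hC hK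
  exact (hC.isCactusFamily_trunk fun j => (hK j).1).exists_iUnion_eq_univ hreach
    (hcompl.trans inter_subset_left) (fun v hv => hC.arc v (hcompl hv).2)
    (hC.mapsTo_compl_iUnion_trunk fun j => (hK j).1)

end IsPathCycleCover

end PathCycleCover

section MultiColoredSubgraph

variable {n m q : ℕ} {g : Fin q → Fin n → ℝ} {h : Fin q → Fin (n + m) → ℝ}
  {t : Fin n → Fin (n + m)} {c : Fin n → Fin q}

theorem HasSpanningCacti.hasSpanningForestAtInputs (hc : HasSpanningCacti g h) :
    HasSpanningForestAtInputs g h := by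
  obtain ⟨W, F, hcact, harc, -, huniv⟩ := hc
  intro v _
  obtain ⟨j, hj⟩ := mem_iUnion.1 (huniv.symm ▸ mem_univ v)
  exact ⟨j, ReflTransGen.mono (fun a b hab => harc j (a, b) hab) _ _
    ((hcact j).reflTransGen hj)⟩

noncomputable def mcsSucc (t : Fin n → Fin (n + m)) (v : Fin (n + m)) : Fin (n + m) :=
  if hv : ∃ i, t i = v then Fin.castAdd m hv.choose else v

theorem mcsSucc_apply (ht : Injective t) (i : Fin n) : mcsSucc t (t i) = Fin.castAdd m i := by
  have hv : ∃ i', t i' = t i := ⟨i, rfl⟩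
  rw [mcsSucc, dif_pos hv, ht hv.choose_spec]

theorem IsMCS.isPathCycleCover (hMCS : IsMCS g h t c) :
    IsPathCycleCover (HasArc g h) (Fin.natAdd n) (mcsSucc t) (range t) where
  injective_root := Fin.natAdd_injective m n
  injOn := by
    rintro _ ⟨i, rfl⟩ _ ⟨i', rfl⟩ hii'
    rw [mcsSucc_apply hMCS.1, mcsSucc_apply hMCS.1] at hii'
    rw [Fin.castAdd_injective _ _ hii']
  arc := by
    rintro _ ⟨i, rfl⟩
    rw [mcsSucc_apply hMCS.1]
    exact ⟨c i, i, rfl, hMCS.2.2 i⟩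
  apply_ne_root := by
    rintro _ ⟨i, rfl⟩ j hij
    rw [mcsSucc_apply hMCS.1, Fin.ext_iff, Fin.val_castAdd, Fin.val_natAdd] at hij
    omega
  exists_pred v hv := by
    cases v using Fin.addCases with
    | left i => exact ⟨t i, mem_range_self i, mcsSucc_apply hMCS.1 i⟩
    | right j => exact absurd rfl (hv j)
  apply_of_notMem _ hv := dif_neg hv

theorem IsMCS.hasSpanningCacti (hMCS : IsMCS g h t c) (hforest : HasSpanningForestAtInputs g h) :
    HasSpanningCacti g h := by
  have hreach : ∀ v, ∃ j, ReflTransGen (HasArc g h) (Fin.natAdd n j) v := by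
    intro v
    by_cases hv : ∃ j, Fin.natAdd n j = v
    · obtain ⟨j, rfl⟩ := hv
      exact ⟨j, .refl⟩
    · exact hforest v hv
  obtain ⟨W, F, hF, hU⟩ := hMCS.isPathCycleCover.exists_isCactusFamily_iUnion_eq_univ hreach
  exact ⟨W, F, hF.isCactus, hF.arc, hF.pairwise_disjoint, hU⟩

end MultiColoredSubgraph

theorem stmt2_general (n m q : ℕ)
    (g : Fin q → Fin n → ℝ) (h : Fin q → Fin (n + m) → ℝ) :
    (HasUnbalancedClass g h ∧ HasSpanningCacti g h) ↔
      (HasUnbalancedClass g h ∧ HasSpanningForestAtInputs g h) := by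
  refine and_congr_right fun hu => ⟨HasSpanningCacti.hasSpanningForestAtInputs, ?_⟩
  obtain ⟨t, c, -, hMCS, -, -⟩ := hu
  exact hMCS.hasSpanningCacti

/-- Under the binary assumption, `𝔾` has an unbalanced similarity class
of multi-colored subgraphs together with a spanning disjoint union of `m` cacti rooted at
the `m` input vertices iff it has an unbalanced similarity class together with a spanning
forest rooted at the `m` input vertices. -/
theorem stmt2 (n m q : ℕ) (hn : 1 ≤ n) (hm : 1 ≤ m) (hq : 1 ≤ q)
    (g : Fin q → Fin n → ℝ) (h : Fin q → Fin (n + m) → ℝ)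
    (hbin : BinaryAssumption g h) :
    (HasUnbalancedClass g h ∧ HasSpanningCacti g h) ↔
      (HasUnbalancedClass g h ∧ HasSpanningForestAtInputs g h) :=
  stmt2_general n m q g h

end StructCtrl
end

section
/- Let g_1,…,g_q ∈ ℝ^{n1} be column vectors and h_1,…,h_q ∈ ℝ^{1×n2} be row vectors, and let G = [g_1 … g_q] and H be the matrix with rows h_1,…,h_q. Then the maximum cardinality of a jointly independent index set of (G, H) (taken to be 0 if none exists) equals min over all subsets S ⊆ 𝐪 of (rank G_S + rank H_{𝐪−S}). -/
open Matrix BigOperators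

namespace StructCtrl

/-!
This is Edmonds' matroid intersection theorem for the two linear matroids represented by the
`g i` and by the `h i`. The inequality `|I| ≤ rank G_S + rank H_{𝐪∖S}` holds because `I ∩ S` and
`I ∖ S` are independent. For equality, induct on the ground set `E`. A zero vector `g e` or `h e`
goes to the side of the cut where it costs nothing. Otherwise take an optimal pair `(I, S)` for
`E ∖ {e}` and an optimal pair `(J, T)` for the contraction of `e`, i.e. for the images of the
vectors in the quotients by `ℝ g e` and `ℝ h e`. Either `J + e` is tight for the cut `S ∪ T + e`,
or, by submodularity of both rank functions, `I` is tight for the cut `S ∩ T`.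
-/

section MatroidIntersection

open Module Submodule Finset

variable {K ι V V₁ V₂ : Type*} [DivisionRing K] [AddCommGroup V] [Module K V]
  [AddCommGroup V₁] [Module K V₁] [AddCommGroup V₂] [Module K V₂]

variable (K) in
noncomputable def spanRank (v : ι → V) (S : Finset ι) : ℕ :=
  finrank K (span K (v '' S))

theorem finiteDimensional_span_image (v : ι → V) (S : Finset ι) :
    FiniteDimensional K (span K (v '' S)) :=
  FiniteDimensional.span_of_finite K (S.finite_toSet.image v)

theorem spanRank_empty (v : ι → V) : spanRank K v ∅ = 0 := by
  rw [spanRank, coe_empty, Set.image_empty, span_empty, finrank_bot]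

theorem spanRank_mono (v : ι → V) {S T : Finset ι} (hST : S ⊆ T) :
    spanRank K v S ≤ spanRank K v T :=
  have := finiteDimensional_span_image (K := K) v T
  Submodule.finrank_mono (span_mono (Set.image_mono (coe_subset.mpr hST)))

theorem spanRank_union_add_spanRank_inter_le [DecidableEq ι] (v : ι → V) (S T : Finset ι) :
    spanRank K v (S ∪ T) + spanRank K v (S ∩ T) ≤ spanRank K v S + spanRank K v T := by
  have := finiteDimensional_span_image (K := K) v S
  have := finiteDimensional_span_image (K := K) v T
  have hinter : span K (v '' ↑(S ∩ T)) ≤ span K (v '' S) ⊓ span K (v '' T) :=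
    le_inf (span_mono (Set.image_mono (by simp))) (span_mono (Set.image_mono (by simp)))
  calc spanRank K v (S ∪ T) + spanRank K v (S ∩ T)
      ≤ finrank K ↥(span K (v '' S) ⊔ span K (v '' T)) +
          finrank K ↥(span K (v '' S) ⊓ span K (v '' T)) := by
        rw [spanRank, coe_union, Set.image_union, span_union]
        exact Nat.add_le_add_left (Submodule.finrank_mono hinter) _
    _ = spanRank K v S + spanRank K v T := finrank_sup_add_finrank_inf_eq _ _

theorem _root_.LinearIndepOn.card_le_spanRank {v : ι → V} {I S : Finset ι}
    (hI : LinearIndepOn K v (I : Set ι)) (hIS : I ⊆ S) : #I ≤ spanRank K v S := by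
  have hcard : spanRank K v I = #I := by
    rw [spanRank, Set.image_eq_range, finrank_span_eq_card hI]; simp
  exact hcard ▸ spanRank_mono v hIS

theorem spanRank_insert_of_eq_zero [DecidableEq ι] {v : ι → V} {e : ι} (he : v e = 0)
    (S : Finset ι) : spanRank K v (insert e S) = spanRank K v S := by
  rw [spanRank, coe_insert, Set.image_insert_eq, he, span_insert_zero, spanRank]

theorem finrank_map_mkQ_add_finrank (p W : Submodule K V) [FiniteDimensional K p]
    [FiniteDimensional K W] :
    finrank K (p.map W.mkQ) + finrank K W = finrank K ↥(p ⊔ W) := by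
  have hrank := LinearMap.finrank_range_add_finrank_ker (W.mkQ ∘ₗ (p ⊔ W).subtype)
  rwa [LinearMap.range_comp, range_subtype, LinearMap.ker_comp, ker_mkQ,
    (comapSubtypeEquivOfLe le_sup_right).finrank_eq, Submodule.map_sup, mkQ_map_self,
    sup_bot_eq] at hrank

theorem spanRank_mkQ_add_one [DecidableEq ι] {v : ι → V} {e : ι} (he : v e ≠ 0)
    (S : Finset ι) :
    spanRank K ((K ∙ v e).mkQ ∘ v) S + 1 = spanRank K v (insert e S) := by
  have := finiteDimensional_span_image (K := K) v S
  rw [spanRank, Set.image_comp, ← map_span, ← finrank_span_singleton (K := K) he,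
    finrank_map_mkQ_add_finrank, spanRank, coe_insert, Set.image_insert_eq, span_insert,
    sup_comm]

theorem _root_.LinearIndepOn.insert_of_mkQ {v : ι → V} {e : ι} {J : Set ι} (he : v e ≠ 0)
    (hJ : LinearIndepOn K ((K ∙ v e).mkQ ∘ v) J) : LinearIndepOn K v (insert e J) := by
  have hdisj : Disjoint (span K (v '' J)) (K ∙ v e) := by
    simpa [Set.image_eq_range] using Submodule.range_ker_disjoint (v := fun x : J ↦ v x) hJ
  rw [Set.insert_eq, Set.union_comm]
  exact (LinearIndepOn.of_comp _ hJ).union (.singleton he) (by simpa using hdisj)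

/-- The two cuts `(S, E ∖ S)` and `(T + e, E + e ∖ T)` uncross, by submodularity of both
rank functions, into `(S ∪ T + e, …)` and `(S ∩ T, …)`. -/
theorem spanRank_uncross [DecidableEq ι] (v : ι → V₁) (w : ι → V₂) {e : ι}
    {E S T : Finset ι} (heT : e ∉ T) :
    spanRank K v (insert e (S ∪ T)) + spanRank K w (insert e E \ insert e (S ∪ T)) +
        (spanRank K v (S ∩ T) + spanRank K w (insert e E \ (S ∩ T))) ≤
      spanRank K v S + spanRank K w (E \ S) +
        (spanRank K v (insert e T) + spanRank K w (insert e E \ T)) := by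
  have hv := spanRank_union_add_spanRank_inter_le (K := K) v S (insert e T)
  have hw := spanRank_union_add_spanRank_inter_le (K := K) w (E \ S) (insert e E \ T)
  rw [union_insert] at hv
  have hST : S ∩ T ⊆ S ∩ insert e T := inter_subset_inter_left (subset_insert e T)
  have hcup : insert e E \ (S ∩ T) ⊆ E \ S ∪ (insert e E \ T) := by
    intro x; simp only [mem_sdiff, mem_union, mem_insert, mem_inter]; grind
  have hcap : insert e E \ insert e (S ∪ T) ⊆ E \ S ∩ (insert e E \ T) := by
    intro x; simp only [mem_sdiff, mem_inter, mem_insert, mem_union]; grind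
  have := spanRank_mono (K := K) v hST
  have := spanRank_mono (K := K) w hcup
  have := spanRank_mono (K := K) w hcap
  omega

theorem card_le_spanRank_add_spanRank_compl [Fintype ι] [DecidableEq ι] {v : ι → V₁}
    {w : ι → V₂} {I : Finset ι} (hv : LinearIndepOn K v (I : Set ι))
    (hw : LinearIndepOn K w (I : Set ι)) (S : Finset ι) :
    #I ≤ spanRank K v S + spanRank K w Sᶜ :=
  calc #I = #(I ∩ S) + #(I \ S) := (card_inter_add_card_sdiff I S).symm
    _ ≤ spanRank K v S + spanRank K w Sᶜ :=
      add_le_add ((hv.mono (coe_subset.mpr inter_subset_left)).card_le_spanRank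
          inter_subset_right)
        ((hw.mono (coe_subset.mpr sdiff_subset)).card_le_spanRank
          fun _ hx ↦ mem_compl.mpr (mem_sdiff.mp hx).2)

theorem exists_linearIndepOn_spanRank_add_spanRank_sdiff_le [DecidableEq ι] (v : ι → V₁)
    (w : ι → V₂) (E : Finset ι) :
    ∃ I ⊆ E, ∃ S ⊆ E, LinearIndepOn K v (I : Set ι) ∧ LinearIndepOn K w (I : Set ι) ∧
      spanRank K v S + spanRank K w (E \ S) ≤ #I := by
  induction E using Finset.induction_on generalizing V₁ V₂ with
  | empty => refine ⟨∅, subset_rfl, ∅, subset_rfl, ?_, ?_, ?_⟩ <;> simp [spanRank_empty]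
  | insert e E he ih =>
    obtain ⟨I, hIE, S, hSE, hvI, hwI, hIS⟩ := ih v w
    have heS : e ∉ S := fun h ↦ he (hSE h)
    by_cases hve : v e = 0
    · refine ⟨I, hIE.trans (subset_insert e E), insert e S, insert_subset_insert e hSE,
        hvI, hwI, ?_⟩
      rwa [spanRank_insert_of_eq_zero hve, insert_sdiff_insert, sdiff_insert_of_notMem he]
    by_cases hwe : w e = 0
    · refine ⟨I, hIE.trans (subset_insert e E), S, hSE.trans (subset_insert e E),
        hvI, hwI, ?_⟩
      rwa [insert_sdiff_of_notMem E heS, spanRank_insert_of_eq_zero hwe]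
    obtain ⟨J, hJE, T, hTE, hvJ, hwJ, hJT⟩ := ih ((K ∙ v e).mkQ ∘ v) ((K ∙ w e).mkQ ∘ w)
    have heT : e ∉ T := fun h ↦ he (hTE h)
    have hvT := spanRank_mkQ_add_one (K := K) hve T
    have hwT := spanRank_mkQ_add_one (K := K) hwe (E \ T)
    rw [← insert_sdiff_of_notMem E heT] at hwT
    have := spanRank_uncross (K := K) v w (E := E) (S := S) heT
    by_cases htight : spanRank K v (insert e (S ∪ T)) +
        spanRank K w (insert e E \ insert e (S ∪ T)) ≤ #J + 1
    · refine ⟨insert e J, insert_subset_insert e hJE, insert e (S ∪ T),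
        insert_subset_insert e (union_subset hSE hTE), ?_, ?_, ?_⟩
      · simpa using hvJ.insert_of_mkQ hve
      · simpa using hwJ.insert_of_mkQ hwe
      · rwa [card_insert_of_notMem fun h ↦ he (hJE h)]
    · exact ⟨I, hIE.trans (subset_insert e E), S ∩ T,
        inter_subset_left.trans (hSE.trans (subset_insert e E)), hvI, hwI, by omega⟩

end MatroidIntersection

section JointIndependence

open Finset

variable {q n1 n2 : ℕ} (g : Fin q → Fin n1 → ℝ) (h : Fin q → Fin n2 → ℝ)

theorem rankCols_eq_spanRank (S : Finset (Fin q)) : rankCols g S = spanRank ℝ g S := by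
  rw [rankCols, rank_eq_finrank_span_cols, spanRank, Set.image_eq_range]
  rfl

theorem rankRows_eq_spanRank (S : Finset (Fin q)) : rankRows h S = spanRank ℝ h S := by
  rw [rankRows, rank_eq_finrank_span_row, spanRank, Set.image_eq_range]
  rfl

variable {g h}

theorem card_le_maxJointIndep {I : Finset (Fin q)} (hI : JointlyIndependent g h I) :
    #I ≤ maxJointIndep g h := by
  have hbdd : BddAbove (insert 0 {c | ∃ I : Finset (Fin q), I.Nonempty ∧
      JointlyIndependent g h I ∧ #I = c}) :=
    ⟨q, by
      rintro c (rfl | ⟨I, -, -, rfl⟩)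
      exacts [Nat.zero_le q, (card_le_univ I).trans_eq (Fintype.card_fin q)]⟩
  rcases I.eq_empty_or_nonempty with rfl | hne
  · simp
  · exact le_csSup hbdd (Set.mem_insert_of_mem _ ⟨I, hne, hI, rfl⟩)

theorem maxJointIndep_le {b : ℕ} (hb : ∀ I, JointlyIndependent g h I → #I ≤ b) :
    maxJointIndep g h ≤ b :=
  csSup_le ⟨0, Set.mem_insert _ _⟩ <| by
    rintro c (rfl | ⟨I, -, hI, rfl⟩)
    exacts [Nat.zero_le b, hb I hI]

end JointIndependence

theorem stmt6_general (n1 n2 q : ℕ)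
    (g : Fin q → Fin n1 → ℝ) (h : Fin q → Fin n2 → ℝ) :
    maxJointIndep g h = ⨅ S : Finset (Fin q), (rankCols g S + rankRows h Sᶜ) := by
  simp only [rankCols_eq_spanRank, rankRows_eq_spanRank]
  obtain ⟨I, -, S, -, hgI, hhI, hIS⟩ :=
    exists_linearIndepOn_spanRank_add_spanRank_sdiff_le (K := ℝ) g h Finset.univ
  rw [← Finset.compl_eq_univ_sdiff] at hIS
  refine le_antisymm (maxJointIndep_le fun J hJ ↦ le_ciInf fun T ↦ ?_) ?_
  · exact card_le_spanRank_add_spanRank_compl hJ.1 hJ.2 T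
  · calc ⨅ T, (spanRank ℝ g T + spanRank ℝ h Tᶜ)
        ≤ spanRank ℝ g S + spanRank ℝ h Sᶜ := ciInf_le (OrderBot.bddBelow _) S
      _ ≤ I.card := hIS
      _ ≤ maxJointIndep g h := card_le_maxJointIndep ⟨hgI, hhI⟩

/-- The maximum cardinality of a (nonempty) jointly independent index set
of `(G, H)` (taken to be `0` if none exists) equals
`min_{S ⊆ 𝐪} (rank G_S + rank H_{𝐪∖S})`. -/
theorem stmt6 (n1 n2 q : ℕ) (h1 : 1 ≤ n1) (h2 : 1 ≤ n2) (hq : 1 ≤ q)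
    (g : Fin q → Fin n1 → ℝ) (h : Fin q → Fin n2 → ℝ) :
    maxJointIndep g h = ⨅ S : Finset (Fin q), (rankCols g S + rankRows h Sᶜ) :=
  stmt6_general n1 n2 q g h

end StructCtrl
end

section
/- Let M(p) = Σ_{k∈𝐪} g_k p_k h_k be a linearly parameterized n1×n2 matrix. Then the generic rank of M, i.e., the maximum of rank M(p) over p ∈ ℝ^q, equals min over all subsets S ⊆ 𝐪 of (rank G_S + rank H_{𝐪−S}). -/
open Matrix BigOperators

namespace StructCtrl

/-!
For every `S`, `M(p)` splits as `G_S D_S H_S + G_{𝐪∖S} D_{𝐪∖S} H_{𝐪∖S}` with diagonal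
`D = diag p`, so its rank is at most `rank G_S + rank H_{𝐪∖S}`. Conversely, `S ↦ rank G_S` and
`S ↦ rank H_S` are rank functions of two matroids on `𝐪`, and Edmonds' matroid intersection
theorem gives a common independent set `I` with `|I| ≤ rank G_S + rank H_{𝐪∖S}` for some `S`.
At the indicator vector of `I`, `M = G_I H_I` is a product of a matrix with independent columns
and one with independent rows, hence has rank `|I|`.
-/

open Finset

structure IsMatroidRank {α : Type*} [DecidableEq α] (r : Finset α → ℕ) : Prop where
  empty : r ∅ = 0
  mono : Monotone r
  submod : ∀ A B, r (A ∪ B) + r (A ∩ B) ≤ r A + r B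
  insert_le : ∀ e A, r (insert e A) ≤ r A + 1

namespace IsMatroidRank

variable {α : Type*} [DecidableEq α] {r : Finset α → ℕ}

lemma singleton_le_one (hr : IsMatroidRank r) (e : α) : r {e} ≤ 1 := by
  simpa [hr.empty] using hr.insert_le e ∅

lemma insert_eq_of_singleton_eq_zero (hr : IsMatroidRank r) {e : α} (he : r {e} = 0)
    (A : Finset α) : r (insert e A) = r A := by
  have hsub := hr.submod {e} A
  have hle := hr.mono (subset_insert e A)
  rw [← insert_eq] at hsub
  omega

lemma one_le_insert (hr : IsMatroidRank r) {e : α} (he : r {e} = 1) (A : Finset α) :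
    1 ≤ r (insert e A) :=
  he ▸ hr.mono (singleton_subset_iff.mpr (mem_insert_self e A))

/-- The rank function of the contraction by a non-loop `e`. -/
lemma contract (hr : IsMatroidRank r) {e : α} (he : r {e} = 1) :
    IsMatroidRank fun A => r (insert e A) - 1 where
  empty := by simp [he]
  mono _ _ hAB := Nat.sub_le_sub_right (hr.mono (insert_subset_insert e hAB)) 1
  submod A B := by
    have hsub := hr.submod (insert e A) (insert e B)
    rw [← insert_union_distrib, ← insert_inter_distrib] at hsub
    have hA := hr.one_le_insert he A
    have hB := hr.one_le_insert he B
    have hAB := hr.one_le_insert he (A ∩ B)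
    have hAuB := hr.one_le_insert he (A ∪ B)
    omega
  insert_le a A := by
    have hle := hr.insert_le a (insert e A)
    rw [insert_comm] at hle
    have hA := hr.one_le_insert he A
    omega

/-- Uncrossing two covers by submodularity. The first one need only cover `E` outside
`S' ∩ U'`, which is how a cover of `E ∖ {e}` combines with one that contains `e` on both sides. -/
lemma exists_cover_two_mul_le {r₁ r₂ : Finset α → ℕ} (hr₁ : IsMatroidRank r₁)
    (hr₂ : IsMatroidRank r₂) {E S U S' U' : Finset α} (h : E ⊆ S ∪ U ∪ S' ∩ U')
    (h' : E ⊆ S' ∪ U') :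
    ∃ T V, E ⊆ T ∪ V ∧ 2 * (r₁ T + r₂ V) ≤ r₁ S + r₂ U + (r₁ S' + r₂ U') := by
  have h₁ := hr₁.submod S S'
  have h₂ := hr₂.submod U U'
  rcases le_total (r₁ (S ∪ S') + r₂ (U ∩ U')) (r₁ (S ∩ S') + r₂ (U ∪ U')) with hle | hle
  · refine ⟨S ∪ S', U ∩ U', fun x hx => ?_, by omega⟩
    grind
  · refine ⟨S ∩ S', U ∪ U', fun x hx => ?_, by omega⟩
    grind

end IsMatroidRank

/-- The nontrivial inequality of Edmonds' matroid intersection theorem, by deletion and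
contraction of an element that is a loop in neither matroid. -/
theorem exists_common_indep_card_ge {α : Type*} [DecidableEq α] {r₁ r₂ : Finset α → ℕ}
    (hr₁ : IsMatroidRank r₁) (hr₂ : IsMatroidRank r₂) (E : Finset α) :
    ∃ I ⊆ E, r₁ I = #I ∧ r₂ I = #I ∧ ∃ S U, E ⊆ S ∪ U ∧ r₁ S + r₂ U ≤ #I := by
  induction E using Finset.induction_on generalizing r₁ r₂ with
  | empty =>
    exact ⟨∅, subset_rfl, hr₁.empty, hr₂.empty, ∅, ∅, by simp, by simp [hr₁.empty, hr₂.empty]⟩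
  | @insert e E heE ih =>
    obtain ⟨I₁, hI₁E, hI₁r₁, hI₁r₂, S₁, U₁, hcov₁, hle₁⟩ := ih hr₁ hr₂
    by_cases he₁ : r₁ {e} = 0
    · refine ⟨I₁, hI₁E.trans (subset_insert e E), hI₁r₁, hI₁r₂, insert e S₁, U₁, ?_, ?_⟩
      · rw [insert_union]; exact insert_subset_insert e hcov₁
      · rwa [hr₁.insert_eq_of_singleton_eq_zero he₁]
    by_cases he₂ : r₂ {e} = 0
    · refine ⟨I₁, hI₁E.trans (subset_insert e E), hI₁r₁, hI₁r₂, S₁, insert e U₁, ?_, ?_⟩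
      · rw [union_insert]; exact insert_subset_insert e hcov₁
      · rwa [hr₂.insert_eq_of_singleton_eq_zero he₂]
    replace he₁ : r₁ {e} = 1 := by have := hr₁.singleton_le_one e; omega
    replace he₂ : r₂ {e} = 1 := by have := hr₂.singleton_le_one e; omega
    obtain ⟨I₂, hI₂E, hI₂r₁, hI₂r₂, S₂, U₂, hcov₂, hle₂⟩ :=
      ih (hr₁.contract he₁) (hr₂.contract he₂)
    obtain ⟨T, V, hcov, hTV⟩ := hr₁.exists_cover_two_mul_le hr₂ (E := insert e E)
      (S := S₁) (U := U₁) (S' := insert e S₂) (U' := insert e U₂)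
      (insert_subset (by simp) (hcov₁.trans subset_union_left))
      (by grind)
    have hS₂ := hr₁.one_le_insert he₁ S₂
    have hU₂ := hr₂.one_le_insert he₂ U₂
    rcases le_total (#I₂ + 1) #I₁ with hI | hI
    · exact ⟨I₁, hI₁E.trans (subset_insert e E), hI₁r₁, hI₁r₂, T, V, hcov, by omega⟩
    · have hcard : #(insert e I₂) = #I₂ + 1 := card_insert_of_notMem fun h => heE (hI₂E h)
      have hI₂₁ := hr₁.one_le_insert he₁ I₂
      have hI₂₂ := hr₂.one_le_insert he₂ I₂
      exact ⟨insert e I₂, insert_subset_insert e hI₂E, by omega, by omega, T, V, hcov, by omega⟩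

section LinearAlgebra

open Module Submodule

variable {K V ι : Type*} [DivisionRing K] [AddCommGroup V] [Module K V] [FiniteDimensional K V]
  [DecidableEq ι]

theorem isMatroidRank_finrank_image (v : ι → V) :
    IsMatroidRank fun S : Finset ι => Set.finrank K (v '' S) where
  empty := by simp
  mono _ _ hST := Set.finrank_mono (Set.image_mono (coe_subset.mpr hST))
  submod A B := by
    have hinf : span K (v '' ↑(A ∩ B)) ≤ span K (v '' A) ⊓ span K (v '' B) :=
      le_inf (span_mono (Set.image_mono (by simp))) (span_mono (Set.image_mono (by simp)))
    have := Submodule.finrank_mono hinf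
    have := finrank_sup_add_finrank_inf_eq (span K (v '' A)) (span K (v '' B))
    rw [Set.finrank, Set.finrank, Set.finrank, Set.finrank, Finset.coe_union, Set.image_union,
      span_union]
    omega
  insert_le e A := by
    have hsing : finrank K (K ∙ v e) ≤ 1 := by simpa using finrank_span_le_card (R := K) {v e}
    have := finrank_add_le_finrank_add_finrank (K ∙ v e) (span K (v '' A))
    rw [Set.finrank, Set.finrank, Finset.coe_insert, Set.image_insert_eq, span_insert]
    omega

end LinearAlgebra

section Matrix

variable {K : Type*} [Field K] {l m n : Type*} [Fintype m] [Fintype n]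

theorem Matrix.rank_add_le (A B : Matrix l n K) : (A + B).rank ≤ A.rank + B.rank := by
  rw [Matrix.rank, Matrix.rank, Matrix.rank, Matrix.mulVecLin_add]
  refine (Submodule.finrank_mono (LinearMap.range_add_le _ _)).trans ?_
  exact Submodule.finrank_add_le_finrank_add_finrank _ _

theorem Matrix.rank_mul_eq_left_of_rank_eq_card (A : Matrix l m K) (B : Matrix m n K)
    (hB : B.rank = Fintype.card m) : (A * B).rank = A.rank := by
  have hsurj : LinearMap.range B.mulVecLin = ⊤ :=
    Submodule.eq_top_of_finrank_eq (by rw [← Matrix.rank, hB, Module.finrank_fintype_fun_eq_card])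
  rw [Matrix.rank, Matrix.mulVecLin_mul, LinearMap.range_comp_of_range_eq_top _ hsurj, Matrix.rank]

end Matrix

section ParamMat

variable {q n1 n2 : ℕ} (g : Fin q → Fin n1 → ℝ) (h : Fin q → Fin n2 → ℝ)

lemma rankCols_eq_finrank_image (S : Finset (Fin q)) : rankCols g S = Set.finrank ℝ (g '' S) := by
  rw [rankCols, Matrix.rank_eq_finrank_span_cols, Set.finrank, Set.image_eq_range]
  rfl

lemma rankRows_eq_rankCols (S : Finset (Fin q)) : rankRows h S = rankCols h S :=
  (Matrix.rank_transpose _).symm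

lemma isMatroidRank_rankCols : IsMatroidRank (rankCols g) := by
  simpa only [← rankCols_eq_finrank_image] using isMatroidRank_finrank_image (K := ℝ) g

lemma paramMat_add (p p' : Fin q → ℝ) :
    paramMat g h (p + p') = paramMat g h p + paramMat g h p' := by
  ext i j
  simp [paramMat, add_mul, sum_add_distrib]

lemma paramMat_transpose (p : Fin q → ℝ) : (paramMat g h p)ᵀ = paramMat h g p := by
  ext i j
  simp only [paramMat, Matrix.transpose_apply, Matrix.of_apply]
  exact sum_congr rfl fun k _ => by ring

lemma paramMat_eq_mul {p : Fin q → ℝ} {S : Finset (Fin q)} (hp : ∀ k ∉ S, p k = 0) :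
    paramMat g h p =
      (Matrix.of fun i (k : S) => g k i) * Matrix.of fun (k : S) j => p k * h k j := by
  ext i j
  rw [Matrix.mul_apply, paramMat, Matrix.of_apply,
    ← sum_subset (subset_univ S) fun k _ hk => by simp [hp k hk]]
  simp only [Matrix.of_apply]
  rw [← sum_coe_sort S]
  exact sum_congr rfl fun k _ => by ring

lemma rank_paramMat_le_rankCols {p : Fin q → ℝ} {S : Finset (Fin q)} (hp : ∀ k ∉ S, p k = 0) :
    (paramMat g h p).rank ≤ rankCols g S :=
  paramMat_eq_mul g h hp ▸ Matrix.rank_mul_le_left _ _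

lemma rank_paramMat_le (p : Fin q → ℝ) (S : Finset (Fin q)) :
    (paramMat g h p).rank ≤ rankCols g S + rankRows h Sᶜ := by
  have hsplit : p = (fun k => if k ∈ S then p k else 0) + fun k => if k ∈ S then 0 else p k := by
    ext k
    by_cases hk : k ∈ S <;> simp [hk]
  rw [hsplit, paramMat_add, rankRows_eq_rankCols]
  refine (Matrix.rank_add_le _ _).trans (add_le_add ?_ ?_)
  · exact rank_paramMat_le_rankCols g h fun k hk => if_neg hk
  · rw [← Matrix.rank_transpose, paramMat_transpose]
    exact rank_paramMat_le_rankCols h g fun k hk => if_pos (by simpa using hk)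

lemma rank_paramMat_indicator {I : Finset (Fin q)} (hg : rankCols g I = #I)
    (hh : rankCols h I = #I) : (paramMat g h fun k => if k ∈ I then 1 else 0).rank = #I := by
  rw [paramMat_eq_mul g h (S := I) fun k hk => if_neg hk, Matrix.rank_mul_eq_left_of_rank_eq_card]
  · exact hg
  · rw [Fintype.card_coe, ← hh, ← rankRows_eq_rankCols]
    simp [rankRows]

lemma rank_paramMat_le_genericRank (p : Fin q → ℝ) : (paramMat g h p).rank ≤ genericRank g h :=
  le_ciSup ⟨n1, by rintro _ ⟨p, rfl⟩; simpa using (paramMat g h p).rank_le_card_height⟩ p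

end ParamMat

theorem stmt7_general (n1 n2 q : ℕ) (g : Fin q → Fin n1 → ℝ) (h : Fin q → Fin n2 → ℝ) :
    genericRank g h = ⨅ S : Finset (Fin q), (rankCols g S + rankRows h Sᶜ) := by
  refine (ciSup_le fun p => le_ciInf fun S => rank_paramMat_le g h p S).antisymm ?_
  obtain ⟨I, -, hIg, hIh, S, U, hcov, hle⟩ :=
    exists_common_indep_card_ge (isMatroidRank_rankCols g) (isMatroidRank_rankCols h) univ
  calc ⨅ S : Finset (Fin q), (rankCols g S + rankRows h Sᶜ)
      ≤ rankCols g S + rankCols h U := by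
        refine (ciInf_le (OrderBot.bddBelow _) S).trans ?_
        rw [rankRows_eq_rankCols]
        gcongr
        exact (isMatroidRank_rankCols h).mono fun k hk =>
          (mem_union.mp (hcov (mem_univ k))).resolve_left (mem_compl.mp hk)
    _ ≤ #I := hle
    _ = (paramMat g h fun k => if k ∈ I then 1 else 0).rank :=
        (rank_paramMat_indicator g h hIg hIh).symm
    _ ≤ genericRank g h := rank_paramMat_le_genericRank g h _

/-- The generic rank of a linearly parameterized matrix
`M(p) = ∑ k, g k • p k • h k` equals `min_{S ⊆ 𝐪} (rank G_S + rank H_{𝐪∖S})`. -/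
theorem stmt7 (n1 n2 q : ℕ) (h1 : 1 ≤ n1) (h2 : 1 ≤ n2) (hq : 1 ≤ q)
    (g : Fin q → Fin n1 → ℝ) (h : Fin q → Fin n2 → ℝ) :
    genericRank g h = ⨅ S : Finset (Fin q), (rankCols g S + rankRows h Sᶜ) :=
  stmt7_general n1 n2 q g h

end StructCtrl
end

section
/- Let (A(p), B(p)) be a linearly parameterized matrix pair satisfying the binary assumption, with graph 𝔾, and let S1 and S2 be two multi-colored subgraphs of 𝔾 in the same similarity class. If π and π' are two matrimonial partitions for this class, then S1 and S2 have the same parity with respect to π if and only if they have the same parity with respect to π'. That is, the relative parity of two similar multi-colored subgraphs does not depend on which matrimonial partition induces their quotient graphs. -/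
open Matrix BigOperators

namespace StructCtrl

/- ### Auxiliary machinery for Statement 10 -/

section Stmt10Aux

variable {α : Type*} [Fintype α] [DecidableEq α]

set_option linter.unusedSectionVars false

/-- Number of cycles (orbits, including fixed points) of a permutation. -/
noncomputable def orbCount (σ : Equiv.Perm α) : ℕ :=
  (Set.range fun v => {w | σ.SameCycle v w}).ncard

lemma class_of_fixed (σ : Equiv.Perm α) {v : α} (hv : σ v = v) :
    {w | σ.SameCycle v w} = {v} := by
  ext w
  simp only [Set.mem_setOf_eq, Set.mem_singleton_iff]
  exact ⟨fun hw => (hw.eq_of_left hv).symm, fun h => h ▸ Equiv.Perm.SameCycle.rfl⟩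

lemma neg_one_pow_congr {a b : ℕ} (h : a % 2 = b % 2) : ((-1:ℤˣ))^a = (-1)^b := by
  rcases Nat.even_or_odd a with ha | ha <;> rcases Nat.even_or_odd b with hb | hb
  · rw [ha.neg_one_pow, hb.neg_one_pow]
  · rw [Nat.even_iff] at ha; rw [Nat.odd_iff] at hb; omega
  · rw [Nat.even_iff] at hb; rw [Nat.odd_iff] at ha; omega
  · rw [ha.neg_one_pow, hb.neg_one_pow]

lemma neg_one_pow_inj {a b : ℕ} (h : ((-1:ℤˣ))^a = (-1)^b) : a % 2 = b % 2 := by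
  by_contra hc
  rcases Nat.even_or_odd a with ha | ha <;> rcases Nat.even_or_odd b with hb | hb
  · exact hc (by rw [Nat.even_iff] at *; omega)
  · rw [ha.neg_one_pow, hb.neg_one_pow] at h; exact absurd h (by decide)
  · rw [ha.neg_one_pow, hb.neg_one_pow] at h; exact absurd h (by decide)
  · exact hc (by rw [Nat.odd_iff] at *; omega)

lemma class_cycle {σ : Equiv.Perm α} (hσ : σ.IsCycle) {v : α} (hv : v ∈ σ.support) :
    {w | σ.SameCycle v w} = (↑σ.support : Set α) := by
  ext w
  simp only [Set.mem_setOf_eq, Finset.mem_coe]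
  constructor
  · rintro ⟨i, rfl⟩
    exact Equiv.Perm.zpow_apply_mem_support.2 hv
  · intro hw
    obtain ⟨i, hi⟩ := hσ.exists_pow_eq (Equiv.Perm.mem_support.1 hv) (Equiv.Perm.mem_support.1 hw)
    exact ⟨(i : ℤ), by rw [zpow_natCast]; exact hi⟩

lemma orbCount_one : orbCount (1 : Equiv.Perm α) = Fintype.card α := by
  unfold orbCount
  have h : (fun v : α => {w | (1 : Equiv.Perm α).SameCycle v w}) = fun v => {v} :=
    funext fun v => class_of_fixed 1 rfl
  rw [h, ← Set.image_univ, Set.ncard_image_of_injective _ Set.singleton_injective,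
    Set.ncard_univ, Nat.card_eq_fintype_card]

lemma orbCount_cycle {σ : Equiv.Perm α} (hσ : σ.IsCycle) :
    orbCount σ + σ.support.card = Fintype.card α + 1 := by
  have hrange : (Set.range fun v => {w | σ.SameCycle v w})
      = insert (↑σ.support) ((fun v : α => ({v} : Set α)) '' (↑σ.support : Set α)ᶜ) := by
    rw [← Set.image_univ, ← Set.union_compl_self (↑σ.support : Set α), Set.image_union,
      Set.insert_eq]
    congr 1
    · have e : (fun v => {w | σ.SameCycle v w}) '' (↑σ.support : Set α)
          = (fun _ => (↑σ.support : Set α)) '' (↑σ.support : Set α) :=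
        Set.image_congr fun v hv => class_cycle hσ hv
      rw [e, Set.Nonempty.image_const (by exact_mod_cast hσ.nonempty_support)]
    · exact Set.image_congr fun v hv =>
        class_of_fixed σ (Equiv.Perm.notMem_support.1 (by simpa using hv))
  have hnm : (↑σ.support : Set α) ∉ ((fun v : α => ({v} : Set α)) '' (↑σ.support : Set α)ᶜ) := by
    rintro ⟨v, hv, heq⟩
    exact hv (by rw [← heq]; exact rfl)
  have h1 : ((↑σ.support : Set α)).ncard + ((↑σ.support : Set α)ᶜ).ncard = Nat.card α :=
    Set.ncard_add_ncard_compl _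
  rw [orbCount, hrange, Set.ncard_insert_of_notMem hnm,
    Set.ncard_image_of_injective _ Set.singleton_injective]
  rw [Set.ncard_coe_finset, Nat.card_eq_fintype_card] at h1
  omega

lemma class_mul_mem {σ τ : Equiv.Perm α} (hd : Equiv.Perm.Disjoint σ τ) (hσ : σ.IsCycle)
    {v : α} (hv : v ∈ σ.support) :
    {w | (σ * τ).SameCycle v w} = (↑σ.support : Set α) := by
  have hτv : τ v = v := by
    rcases hd v with h | h
    · exact absurd h (Equiv.Perm.mem_support.1 hv)
    · exact h
  ext w
  simp only [Set.mem_setOf_eq, Finset.mem_coe]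
  constructor
  · rintro ⟨i, rfl⟩
    rw [hd.commute.mul_zpow, Equiv.Perm.mul_apply,
      Equiv.Perm.zpow_apply_eq_self_of_apply_eq_self hτv]
    exact Equiv.Perm.zpow_apply_mem_support.2 hv
  · intro hw
    obtain ⟨i, hi⟩ := hσ.exists_pow_eq (Equiv.Perm.mem_support.1 hv) (Equiv.Perm.mem_support.1 hw)
    refine ⟨(i : ℤ), ?_⟩
    rw [hd.commute.mul_zpow, Equiv.Perm.mul_apply,
      Equiv.Perm.zpow_apply_eq_self_of_apply_eq_self hτv, zpow_natCast]
    exact hi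

lemma class_mul_notMem {σ τ : Equiv.Perm α} (hd : Equiv.Perm.Disjoint σ τ)
    {v : α} (hv : v ∉ σ.support) :
    {w | (σ * τ).SameCycle v w} = {w | τ.SameCycle v w} := by
  have key : ∀ i : ℤ, ((σ * τ) ^ i) v = (τ ^ i) v := by
    intro i
    rw [hd.commute.mul_zpow, Equiv.Perm.mul_apply]
    have hτi : (τ ^ i) v ∉ σ.support := by
      by_cases hvτ : v ∈ τ.support
      · have h2 : (τ ^ i) v ∈ τ.support := Equiv.Perm.zpow_apply_mem_support.2 hvτ
        exact fun hc =>
          Finset.disjoint_left.1 (Equiv.Perm.disjoint_iff_disjoint_support.1 hd) hc h2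
      · rw [Equiv.Perm.zpow_apply_eq_self_of_apply_eq_self
          (Equiv.Perm.notMem_support.1 hvτ)]
        exact hv
    exact Equiv.Perm.zpow_apply_eq_self_of_apply_eq_self
      (Equiv.Perm.notMem_support.1 hτi) i
  ext w
  simp only [Set.mem_setOf_eq]
  constructor
  · rintro ⟨i, rfl⟩; exact ⟨i, (key i).symm⟩
  · rintro ⟨i, rfl⟩; exact ⟨i, key i⟩

lemma orbCount_mul {σ τ : Equiv.Perm α} (hd : Equiv.Perm.Disjoint σ τ) (hσ : σ.IsCycle) :
    orbCount (σ * τ) + σ.support.card = orbCount τ + 1 := by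
  set C : α → Set α := fun v => {w | τ.SameCycle v w} with hC
  have hrange : (Set.range fun v => {w | (σ * τ).SameCycle v w})
      = insert (↑σ.support) (C '' (↑σ.support : Set α)ᶜ) := by
    rw [← Set.image_univ, ← Set.union_compl_self (↑σ.support : Set α), Set.image_union,
      Set.insert_eq]
    congr 1
    · have e : (fun v => {w | (σ * τ).SameCycle v w}) '' (↑σ.support : Set α)
          = (fun _ => (↑σ.support : Set α)) '' (↑σ.support : Set α) :=
        Set.image_congr fun v hv => class_mul_mem hd hσ hv
      rw [e, Set.Nonempty.image_const (by exact_mod_cast hσ.nonempty_support)]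
    · exact Set.image_congr fun v hv => class_mul_notMem hd (by simpa using hv)
  have hτfix : ∀ v ∈ (↑σ.support : Set α), C v = {v} := by
    intro v hv
    apply class_of_fixed
    rcases hd v with h | h
    · exact absurd h (Equiv.Perm.mem_support.1 (by simpa using hv))
    · exact h
  have hrangeτ : Set.range C
      = (C '' (↑σ.support : Set α)ᶜ) ∪ ((fun v : α => ({v} : Set α)) '' (↑σ.support : Set α)) := by
    rw [← Set.image_univ, ← Set.compl_union_self (↑σ.support : Set α), Set.image_union]
    congr 1
    exact Set.image_congr hτfix
  have hvmem : ∀ v : α, v ∈ C v := fun v => Equiv.Perm.SameCycle.rfl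
  have hnm : (↑σ.support : Set α) ∉ C '' (↑σ.support : Set α)ᶜ := by
    rintro ⟨v, hv, heq⟩
    exact hv (by rw [← heq]; exact hvmem v)
  have hdisj : Disjoint (C '' (↑σ.support : Set α)ᶜ)
      ((fun v : α => ({v} : Set α)) '' (↑σ.support : Set α)) := by
    rw [Set.disjoint_left]
    rintro a ⟨v, hv, rfl⟩ ⟨u, hu, heq⟩
    have h2 : v ∈ ({u} : Set α) := by
      rw [show ({u} : Set α) = C v from heq]; exact hvmem v
    rw [Set.mem_singleton_iff] at h2
    exact hv (by rw [h2]; exact hu)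
  have h1 : orbCount (σ * τ) = (C '' (↑σ.support : Set α)ᶜ).ncard + 1 := by
    rw [orbCount, hrange, Set.ncard_insert_of_notMem hnm]
  have h2 : orbCount τ = (C '' (↑σ.support : Set α)ᶜ).ncard + σ.support.card := by
    rw [orbCount, ← hC, hrangeτ, Set.ncard_union_eq hdisj,
      Set.ncard_image_of_injective _ Set.singleton_injective, Set.ncard_coe_finset]
  omega

/-- Parity of the number of orbits of a permutation is determined by its sign. -/
theorem orb_parity (σ : Equiv.Perm α) :
    ((-1:ℤˣ)) ^ (orbCount σ) * Equiv.Perm.sign σ = (-1) ^ (Fintype.card α) := by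
  induction σ using Equiv.Perm.cycle_induction_on with
  | base_one => simp [orbCount_one]
  | base_cycles σ hσ =>
      have h1 := orbCount_cycle hσ
      rw [hσ.sign]
      have e1 : (-(-1:ℤˣ)^σ.support.card) = (-1)^(σ.support.card+1) := by
        rw [pow_succ, mul_neg_one]
      rw [e1, ← pow_add]
      exact neg_one_pow_congr (by omega)
  | induction_disjoint σ τ hd hc hσ hτ =>
      have hQ := orbCount_mul hd hc
      rw [Equiv.Perm.sign_mul, hc.sign]
      rcases Int.units_eq_one_or (Equiv.Perm.sign τ) with hs | hs
      · rw [hs, mul_one] at hτ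
        have e1 : (-(-1:ℤˣ)^σ.support.card) = (-1)^(σ.support.card+1) := by
          rw [pow_succ, mul_neg_one]
        rw [hs, e1, mul_one, ← pow_add, ← hτ]
        exact neg_one_pow_congr (by omega)
      · rw [hs] at hτ ⊢
        have hτ' : ((-1:ℤˣ))^(orbCount τ + 1) = (-1)^(Fintype.card α) := by
          rw [pow_succ, mul_neg_one, ← mul_neg_one ((-1:ℤˣ)^(orbCount τ))]
          exact hτ
        have e2 : ((-1:ℤˣ))^(orbCount (σ*τ)) * (-(-1)^σ.support.card * -1)
            = (-1)^(orbCount (σ*τ) + σ.support.card) := by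
          rw [neg_mul_neg, mul_one, ← pow_add]
        rw [e2, hQ]
        exact hτ'

lemma ncard_le_orbCount (σ : Equiv.Perm α) (S : Set α) (hfix : ∀ v ∈ S, σ v = v) :
    S.ncard ≤ orbCount σ := by
  have hinj : Set.InjOn (fun v => {w | σ.SameCycle v w}) S := by
    intro a ha b hb hab
    have hab' : {w | σ.SameCycle a w} = {w | σ.SameCycle b w} := hab
    rw [class_of_fixed σ (hfix a ha), class_of_fixed σ (hfix b hb)] at hab'
    exact Set.singleton_injective hab' 
  calc S.ncard = ((fun v => {w | σ.SameCycle v w}) '' S).ncard :=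
        (Set.ncard_image_of_injOn hinj).symm
    _ ≤ orbCount σ := Set.ncard_le_ncard (Set.image_subset_range _ S) (Set.toFinite _)

lemma orbitCount_eq_orbCount {N : ℕ} (σ : Equiv.Perm (Fin N)) :
    orbitCount ⇑σ = orbCount σ := by
  unfold orbitCount orbCount
  have hcl : (fun v => {w | ∃ a b : ℕ, (⇑σ)^[a] v = (⇑σ)^[b] w})
      = fun v => {w | σ.SameCycle v w} := by
    funext v
    ext w
    simp only [Set.mem_setOf_eq]
    constructor
    · rintro ⟨a, b, hab⟩
      rw [Equiv.Perm.iterate_eq_pow, Equiv.Perm.iterate_eq_pow] at hab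
      have h1 : σ.SameCycle v ((σ^a) v) := ⟨(a : ℤ), by rw [zpow_natCast]⟩
      have h2 : σ.SameCycle w ((σ^b) w) := ⟨(b : ℤ), by rw [zpow_natCast]⟩
      rw [← hab] at h2
      exact h1.trans h2.symm
    · intro hsc
      obtain ⟨i, _, hi⟩ := hsc.exists_pow_eq'
      exact ⟨i, 0, by simpa [Equiv.Perm.iterate_eq_pow] using hi⟩
  rw [hcl]

end Stmt10Aux

section Stmt10Weld

variable {n m : ℕ}

lemma castAdd_ne_natAdd (i : Fin n) (j : Fin m) : Fin.castAdd m i ≠ Fin.natAdd n j := by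
  intro hcon
  have h1 := congrArg Fin.val hcon
  simp only [Fin.coe_castAdd, Fin.coe_natAdd] at h1
  have := i.isLt
  omega

lemma weld_apply_mem {t : Fin n → Fin (n + m)} {μ : Equiv.Perm (Fin (n + m))}
    (ht : Function.Injective t) (i : Fin n) :
    weldMap t μ (t i) = Fin.castAdd m i := by
  have hv : ∃ j, t j = t i := ⟨i, rfl⟩
  unfold weldMap
  rw [dif_pos hv]
  congr 1
  exact ht hv.choose_spec

lemma weld_apply_sink {t : Fin n → Fin (n + m)} {μ : Equiv.Perm (Fin (n + m))}
    {v : Fin (n + m)} (hns : ¬ ∃ i, t i = v) (hc : ∃ i, Fin.castAdd m i = v) :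
    weldMap t μ v = μ v := by
  unfold weldMap
  rw [dif_neg hns, if_pos hc]

lemma weld_apply_iso {t : Fin n → Fin (n + m)} {μ : Equiv.Perm (Fin (n + m))}
    {v : Fin (n + m)} (hns : ¬ ∃ i, t i = v) (hc : ¬ ∃ i, Fin.castAdd m i = v) :
    weldMap t μ v = v := by
  unfold weldMap
  rw [dif_neg hns, if_neg hc]

lemma weld_bijective {t : Fin n → Fin (n + m)} {μ : Equiv.Perm (Fin (n + m))}
    (ht : Function.Injective t) (hμ : IsMatrimonial t μ) :
    Function.Bijective (weldMap t μ) := by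
  rw [← Finite.injective_iff_bijective]
  have hPS : ∀ v, (¬ ∃ i, t i = v) → (∃ i, Fin.castAdd m i = v) →
      (∃ i, t i = μ v) ∧ ∃ j, Fin.natAdd n j = μ v := fun v h1 h2 => (hμ v).1 ⟨h1, h2⟩
  -- a generic "cross" fact: images of the three kinds of vertices are distinct
  have cross1 : ∀ v1 v2, (∃ i, t i = v1) → (¬ ∃ i, t i = v2) →
      weldMap t μ v1 ≠ weldMap t μ v2 := by
    rintro v1 v2 ⟨i1, rfl⟩ h2
    rw [weld_apply_mem ht]
    by_cases hc2 : ∃ i, Fin.castAdd m i = v2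
    · rw [weld_apply_sink h2 hc2]
      obtain ⟨j, hj⟩ := (hPS v2 h2 hc2).2
      rw [← hj]
      exact castAdd_ne_natAdd _ _
    · rw [weld_apply_iso h2 hc2]
      exact fun heq => hc2 ⟨i1, heq⟩
  have cross2 : ∀ v1 v2, (¬ ∃ i, t i = v1) → (∃ i, Fin.castAdd m i = v1) →
      (¬ ∃ i, t i = v2) → (¬ ∃ i, Fin.castAdd m i = v2) →
      weldMap t μ v1 ≠ weldMap t μ v2 := by
    intro v1 v2 h1 hc1 h2 hc2
    rw [weld_apply_sink h1 hc1, weld_apply_iso h2 hc2]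
    intro heq
    exact h2 (heq ▸ (hPS v1 h1 hc1).1)
  intro v1 v2 heq
  by_cases h1 : ∃ i, t i = v1 <;> by_cases h2 : ∃ i, t i = v2
  · obtain ⟨i1, rfl⟩ := h1
    obtain ⟨i2, rfl⟩ := h2
    rw [weld_apply_mem ht, weld_apply_mem ht] at heq
    have : i1 = i2 := by
      have hv := congrArg Fin.val heq
      simp only [Fin.coe_castAdd] at hv
      exact Fin.ext hv
    rw [this]
  · exact absurd heq (cross1 v1 v2 h1 h2)
  · exact absurd heq.symm (cross1 v2 v1 h2 h1)
  · by_cases hc1 : ∃ i, Fin.castAdd m i = v1 <;> by_cases hc2 : ∃ i, Fin.castAdd m i = v2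
    · rw [weld_apply_sink h1 hc1, weld_apply_sink h2 hc2] at heq
      exact μ.injective heq
    · exact absurd heq (cross2 v1 v2 h1 hc1 h2 hc2)
    · exact absurd heq.symm (cross2 v2 v1 h2 hc2 h1 hc1)
    · rwa [weld_apply_iso h1 hc1, weld_apply_iso h2 hc2] at heq

/-- The weld map as a permutation. -/
noncomputable def weldPerm (t : Fin n → Fin (n + m)) (μ : Equiv.Perm (Fin (n + m)))
    (ht : Function.Injective t) (hμ : IsMatrimonial t μ) : Equiv.Perm (Fin (n + m)) :=
  Equiv.ofBijective (weldMap t μ) (weld_bijective ht hμ)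

lemma weldPerm_coe (t : Fin n → Fin (n + m)) (μ : Equiv.Perm (Fin (n + m)))
    (ht : Function.Injective t) (hμ : IsMatrimonial t μ) :
    ⇑(weldPerm t μ ht hμ) = weldMap t μ := rfl

open Classical in
/-- Correction permutation function, depending only on the sink-set data `R`. -/
noncomputable def tauFun (R : Set (Fin (n + m))) (μ μ' : Equiv.Perm (Fin (n + m)))
    (v : Fin (n + m)) : Fin (n + m) :=
  if (v ∈ R ∧ ∃ j : Fin m, Fin.natAdd n j = v) then μ' (μ.symm v) else v

lemma weld_factor {t : Fin n → Fin (n + m)} {μ μ' : Equiv.Perm (Fin (n + m))}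
    (ht : Function.Injective t) (hμ : IsMatrimonial t μ) (hμ' : IsMatrimonial t μ') :
    ∀ v, weldMap t μ' v = tauFun (Set.range t) μ μ' (weldMap t μ v) := by
  intro v
  by_cases h1 : ∃ i, t i = v
  · obtain ⟨i, rfl⟩ := h1
    rw [weld_apply_mem ht, weld_apply_mem ht, tauFun, if_neg]
    rintro ⟨-, j, hj⟩
    exact castAdd_ne_natAdd i j hj.symm
  · by_cases hc : ∃ i, Fin.castAdd m i = v
    · have hsink : IsPureSink t v := ⟨h1, hc⟩
      have hsrc : IsPureSource t (μ v) := (hμ v).1 hsink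
      have hsrc' : IsPureSource t (μ' v) := (hμ' v).1 hsink
      rw [weld_apply_sink h1 hc, weld_apply_sink h1 hc, tauFun,
        if_pos ⟨hsrc.1, hsrc.2⟩, Equiv.symm_apply_apply]
    · rw [weld_apply_iso h1 hc, weld_apply_iso h1 hc, tauFun, if_neg]
      rintro ⟨⟨i, hi⟩, -⟩
      exact h1 ⟨i, hi⟩

end Stmt10Weld


/-- Under the binary assumption, for two multi-colored subgraphs
`(t1, c1)` and `(t2, c2)` of `𝔾` in the same similarity class and two matrimonial
partitions `μ`, `μ'` for this class, the two subgraphs have the same parity with respect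
to `μ` iff they have the same parity with respect to `μ'`. -/
theorem stmt10 (n m q : ℕ) (hn : 1 ≤ n) (hm : 1 ≤ m) (hq : 1 ≤ q)
    (g : Fin q → Fin n → ℝ) (h : Fin q → Fin (n + m) → ℝ)
    (hbin : BinaryAssumption g h)
    (t1 t2 : Fin n → Fin (n + m)) (c1 c2 : Fin n → Fin q)
    (h1 : IsMCS g h t1 c1) (h2 : IsMCS g h t2 c2)
    (hsink : Set.range t1 = Set.range t2) (hcol : Set.range c1 = Set.range c2)
    (μ μ' : Equiv.Perm (Fin (n + m)))
    (hμ : IsMatrimonial t1 μ) (hμ' : IsMatrimonial t1 μ') :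
    ((Odd (quotCycleCount t1 μ) ↔ Odd (quotCycleCount t2 μ)) ↔
      (Odd (quotCycleCount t1 μ') ↔ Odd (quotCycleCount t2 μ'))) := by
  classical
  have ht1 : Function.Injective t1 := h1.1
  have ht2 : Function.Injective t2 := h2.1
  have hmem : ∀ v, (∃ i, t1 i = v) ↔ (∃ i, t2 i = v) := fun v => Set.ext_iff.1 hsink v
  have hμ2 : IsMatrimonial t2 μ := by
    intro v
    have base := hμ v
    unfold IsPureSink IsPureSource at base ⊢
    rw [← hmem v, ← hmem (μ v)]
    exact base
  have hμ2' : IsMatrimonial t2 μ' := by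
    intro v
    have base := hμ' v
    unfold IsPureSink IsPureSource at base ⊢
    rw [← hmem v, ← hmem (μ' v)]
    exact base
  set σ1 := weldPerm t1 μ ht1 hμ with hσ1
  set σ1' := weldPerm t1 μ' ht1 hμ' with hσ1'
  set σ2 := weldPerm t2 μ ht2 hμ2 with hσ2
  set σ2' := weldPerm t2 μ' ht2 hμ2' with hσ2'
  have htau12 : tauFun (Set.range t1) μ μ' = tauFun (Set.range t2) μ μ' := by rw [hsink]
  obtain ⟨τh, hfac1, hfac2⟩ :
      ∃ τh : Equiv.Perm (Fin (n + m)), σ1' = τh * σ1 ∧ σ2' = τh * σ2 := by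
    refine ⟨σ1' * σ1⁻¹, (inv_mul_cancel_right _ _).symm, ?_⟩
    have w1 : ∀ y, σ1' y = tauFun (Set.range t1) μ μ' (σ1 y) := weld_factor ht1 hμ hμ'
    have w2 : ∀ y, σ2' y = tauFun (Set.range t2) μ μ' (σ2 y) := weld_factor ht2 hμ2 hμ2'
    refine Equiv.ext fun v => ?_
    have hr : ((σ1' * σ1⁻¹) * σ2) v = σ1' (σ1.symm (σ2 v)) := rfl
    rw [hr, w1 (σ1.symm (σ2 v)), Equiv.apply_symm_apply, htau12]
    exact w2 v
  have p1 := orb_parity σ1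
  have p2 := orb_parity σ2
  have p1' := orb_parity σ1'
  have p2' := orb_parity σ2'
  have hsgn : Equiv.Perm.sign σ1' * Equiv.Perm.sign σ2'
      = Equiv.Perm.sign σ1 * Equiv.Perm.sign σ2 := by
    rw [hfac1, hfac2, Equiv.Perm.sign_mul, Equiv.Perm.sign_mul, mul_mul_mul_comm,
      Int.units_mul_self, one_mul]
  have A : (((-1:ℤˣ))^(orbCount σ1') * Equiv.Perm.sign σ1')
        * (((-1:ℤˣ))^(orbCount σ2') * Equiv.Perm.sign σ2')
      = (((-1:ℤˣ))^(orbCount σ1) * Equiv.Perm.sign σ1)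
        * (((-1:ℤˣ))^(orbCount σ2) * Equiv.Perm.sign σ2) := by
    rw [p1, p2, p1', p2']
  rw [mul_mul_mul_comm, mul_mul_mul_comm ((-1:ℤˣ)^(orbCount σ1)), ← pow_add, ← pow_add,
    hsgn] at A
  have hpar : (orbCount σ1' + orbCount σ2') % 2 = (orbCount σ1 + orbCount σ2) % 2 :=
    neg_one_pow_inj (mul_right_cancel A)
  have hKeq : isolatedCount t1 = isolatedCount t2 := by
    unfold isolatedCount
    congr 1
    ext v
    simp only [Set.mem_setOf_eq]
    rw [hmem v]
  have hfixgen : ∀ (t : Fin n → Fin (n + m)) (μ0 : Equiv.Perm (Fin (n + m)))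
      (ht : Function.Injective t) (hμ0 : IsMatrimonial t μ0),
      ∀ v ∈ {v : Fin (n + m) | (¬ ∃ i : Fin n, t i = v) ∧ ∃ j : Fin m, Fin.natAdd n j = v},
        weldPerm t μ0 ht hμ0 v = v := by
    rintro t μ0 ht hμ0 v ⟨hns, j, hj⟩
    have hc : ¬ ∃ i, Fin.castAdd m i = v := by
      rintro ⟨i, hi⟩
      exact castAdd_ne_natAdd i j (hi.trans hj.symm)
    exact weld_apply_iso hns hc
  have hK1 : isolatedCount t1 ≤ orbCount σ1 :=
    ncard_le_orbCount σ1 _ (hfixgen t1 μ ht1 hμ)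
  have hK1' : isolatedCount t1 ≤ orbCount σ1' :=
    ncard_le_orbCount σ1' _ (hfixgen t1 μ' ht1 hμ')
  have hK2 : isolatedCount t2 ≤ orbCount σ2 :=
    ncard_le_orbCount σ2 _ (hfixgen t2 μ ht2 hμ2)
  have hK2' : isolatedCount t2 ≤ orbCount σ2' :=
    ncard_le_orbCount σ2' _ (hfixgen t2 μ' ht2 hμ2')
  have e1 : quotCycleCount t1 μ = orbCount σ1 - isolatedCount t1 := by
    unfold quotCycleCount
    rw [show weldMap t1 μ = ⇑σ1 from rfl, orbitCount_eq_orbCount]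
  have e2 : quotCycleCount t2 μ = orbCount σ2 - isolatedCount t2 := by
    unfold quotCycleCount
    rw [show weldMap t2 μ = ⇑σ2 from rfl, orbitCount_eq_orbCount]
  have e3 : quotCycleCount t1 μ' = orbCount σ1' - isolatedCount t1 := by
    unfold quotCycleCount
    rw [show weldMap t1 μ' = ⇑σ1' from rfl, orbitCount_eq_orbCount]
  have e4 : quotCycleCount t2 μ' = orbCount σ2' - isolatedCount t2 := by
    unfold quotCycleCount
    rw [show weldMap t2 μ' = ⇑σ2' from rfl, orbitCount_eq_orbCount]
  rw [e1, e2, e3, e4]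
  simp only [Nat.odd_iff]
  omega


end StructCtrl
end
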